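/- arXiv:1802.07440 — 3 statements merged into one kernel-verified Lean document; each statement's English description precedes it below -/
import Mathlib

section
/- Let H = ([n_H], E_H) be a graph and G = (A ∪ B, E) the bipartite instance constructed from H as described. Then no popular matching in G matches the vertex a_0 and no popular matching in G matches the vertex b_0. -/
open scoped Classical

/-- A roommates instance: a (finite) graph `(V, adj)` together with a raw preference
relation: `pref u v w` means vertex `u` strictly prefers its neighbor `v` to its
neighbor `w`. -/
structure RoommatesInstance (V : Type) where
  adj : V → V → Prop
  adj_symm : ∀ u v, adj u v → adj v u
  adj_irrefl : ∀ u, ¬ adj u u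
  pref : V → V → V → Prop

namespace RoommatesInstance

variable {V : Type}

/-- The preference relation of each vertex is a strict linear order on its neighbors. -/
def StrictPrefs (G : RoommatesInstance V) : Prop :=
  (∀ u v w, G.pref u v w → G.adj u v ∧ G.adj u w) ∧
  (∀ u v w x, G.pref u v w → G.pref u w x → G.pref u v x) ∧
  (∀ u v w, G.pref u v w → ¬ G.pref u w v) ∧
  (∀ u v w, G.adj u v → G.adj u w → v ≠ w → G.pref u v w ∨ G.pref u w v)

/-- A matching, encoded by the partner function of the corresponding perfect matching
`M̃` of `G̃` (the graph `G` with a self-loop added at every vertex): `m u = u` means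
that `u` is unmatched in `M`, i.e. matched to itself along its self-loop in `M̃`. -/
structure Matching (G : RoommatesInstance V) where
  m : V → V
  invol : ∀ u, m (m u) = u
  adj_of_ne : ∀ u, m u ≠ u → G.adj u (m u)

variable (G : RoommatesInstance V)

/-- `u` considers `v` strictly better than `w`, where each of `v`, `w` is either a
neighbor of `u` or `u` itself (`u` itself stands for being unmatched, which every
vertex ranks below all of its neighbors). -/
def Better (u v w : V) : Prop :=
  (w = u ∧ v ≠ u) ∨ (v ≠ u ∧ w ≠ u ∧ G.pref u v w)

/-- vertex `u` prefers matching `M` to matching `M'` -/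
def Prefers (M M' : G.Matching) (u : V) : Prop :=
  G.Better u (M.m u) (M'.m u)

/-- `φ(M,M')`: the number of vertices preferring `M` to `M'` -/
noncomputable def phi [Fintype V] (M M' : G.Matching) : ℕ :=
  (Finset.univ.filter fun u => G.Prefers M M' u).card

/-- `Δ(M,M') = φ(M,M') - φ(M',M)` -/
noncomputable def delta [Fintype V] (M M' : G.Matching) : ℤ :=
  (G.phi M M' : ℤ) - (G.phi M' M : ℤ)

/-- a matching `M` is popular if it never loses a head-to-head election -/
def Popular [Fintype V] (M : G.Matching) : Prop :=
  ∀ M' : G.Matching, 0 ≤ G.delta M M'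

/-- `(u,v)` is a blocking edge to `M`: both endpoints prefer each other to their
assignments in `M̃`. -/
def Blocks (M : G.Matching) (u v : V) : Prop :=
  G.adj u v ∧ G.Better u v (M.m u) ∧ G.Better v u (M.m v)

/-- `(u,v)` is a negative edge to `M`: both endpoints prefer their assignments in `M̃`
to each other. -/
def Negative (M : G.Matching) (u v : V) : Prop :=
  G.adj u v ∧ G.Better u (M.m u) v ∧ G.Better v (M.m v) u

/-- `cost_M` on the edges of `G̃`: `cost_M(u,v) = 2` for a blocking edge, `-2` for a
negative edge, `0` otherwise; `cost_M(u,u) = 0` if `u` is unmatched in `M` and `-1`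
otherwise. -/
noncomputable def cost (M : G.Matching) (u v : V) : ℤ :=
  if u = v then (if M.m u = u then 0 else -1)
  else if G.Blocks M u v then 2
  else if G.Negative M u v then -2
  else 0

/-- a stable matching: no blocking edge -/
def Stable (M : G.Matching) : Prop := ∀ u v, ¬ G.Blocks M u v

/-- the number of edges of a matching -/
noncomputable def msize [Fintype V] (M : G.Matching) : ℕ :=
  (Finset.univ.filter fun u => M.m u ≠ u).card / 2

theorem cost_comm (M : G.Matching) (u v : V) : G.cost M u v = G.cost M v u := by
  unfold cost
  rcases eq_or_ne u v with rfl | huv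
  · rfl
  · rw [if_neg huv, if_neg (Ne.symm huv)]
    have hb : G.Blocks M u v ↔ G.Blocks M v u :=
      ⟨fun ⟨h1, h2, h3⟩ => ⟨G.adj_symm _ _ h1, h3, h2⟩,
       fun ⟨h1, h2, h3⟩ => ⟨G.adj_symm _ _ h1, h3, h2⟩⟩
    have hn : G.Negative M u v ↔ G.Negative M v u :=
      ⟨fun ⟨h1, h2, h3⟩ => ⟨G.adj_symm _ _ h1, h3, h2⟩,
       fun ⟨h1, h2, h3⟩ => ⟨G.adj_symm _ _ h1, h3, h2⟩⟩
    simp only [hb, hn]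

end RoommatesInstance

/-! ## The bipartite instance `G` constructed from a vertex-cover instance `H` -/

/-- The vertex set of the bipartite instance `G` built from a graph `H` on `Fin n`:
the two special vertices `a_0, b_0`; the gadget `C_i` on `a_i, a'_i, b_i, b'_i` for
every vertex `i` of `H`; and the gadget `D_e` on `s_e, s'_e, s''_e, t_e, t'_e, t''_e`
for every edge `e = (i,j)` of `H` with `i < j` (encoded as `s i j`, ...; for pairs
`(i,j)` that are not an edge of `H` with `i < j` these vertices are isolated, hence
irrelevant). -/
inductive BV (n : ℕ) where
  | a0 | b0
  | a (i : Fin n) | a' (i : Fin n) | b (i : Fin n) | b' (i : Fin n)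
  | s (i j : Fin n) | s' (i j : Fin n) | s'' (i j : Fin n)
  | t (i j : Fin n) | t' (i j : Fin n) | t'' (i j : Fin n)
  deriving DecidableEq, Fintype

variable {n : ℕ}

/-- The edges of `G` (listed in one direction each).  Writing `e = (i,j)` with
`H.Adj i j` and `i < j`: the gadget `D_e` has edges `s_e t'_e`, `s_e t''_e`,
`s'_e t'_e`, `s'_e t_e`, `s''_e t''_e`, `s''_e t_e`, plus `s_e b_j` and `t_e a_i`;
the gadget `C_i` has edges `a_i b_i`, `a_i b'_i`, `a'_i b_i`, `a'_i b'_i`; and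
`a_0` is adjacent to every `b_i`, `b_0` to every `a_i`. -/
def brel (H : SimpleGraph (Fin n)) : BV n → BV n → Prop := fun x y =>
  (∃ i, x = BV.a0 ∧ y = BV.b i) ∨
  (∃ i, x = BV.b0 ∧ y = BV.a i) ∨
  (∃ i, x = BV.a i ∧ (y = BV.b i ∨ y = BV.b' i)) ∨
  (∃ i, x = BV.a' i ∧ (y = BV.b i ∨ y = BV.b' i)) ∨
  (∃ i j, x = BV.a i ∧ y = BV.t i j ∧ H.Adj i j ∧ i < j) ∨
  (∃ i j, x = BV.b j ∧ y = BV.s i j ∧ H.Adj i j ∧ i < j) ∨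
  (∃ i j, x = BV.s i j ∧ (y = BV.t' i j ∨ y = BV.t'' i j) ∧ H.Adj i j ∧ i < j) ∨
  (∃ i j, x = BV.s' i j ∧ (y = BV.t' i j ∨ y = BV.t i j) ∧ H.Adj i j ∧ i < j) ∨
  (∃ i j, x = BV.s'' i j ∧ (y = BV.t'' i j ∨ y = BV.t i j) ∧ H.Adj i j ∧ i < j)

/-- Ranks encoding the preference lists of `G` (lower rank = more preferred), where
`e = (i,j)` with `i < j`:
`s'_e : t'_e ≻ t_e`;  `s''_e : t''_e ≻ t_e`;  `s_e : t'_e ≻ b_j ≻ t''_e`;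
`t'_e : s'_e ≻ s_e`;  `t''_e : s''_e ≻ s_e`;  `t_e : s''_e ≻ a_i ≻ s'_e`;
`a'_i : b_i ≻ b'_i`;  `b'_i : a_i ≻ a'_i`;
`a_i : b_i ≻ b'_i ≻ b_0 ≻ ⋯ (the t_e's, ordered by the other endpoint of e)`;
`b_i : a_i ≻ a'_i ≻ a_0 ≻ ⋯ (the s_e's, ordered by the other endpoint of e)`;
`a_0` and `b_0` rank their neighbors by index. -/
def brank : BV n → BV n → ℕ := fun x y =>
  match x, y with
  | BV.s' _ _, BV.t' _ _ => 0
  | BV.s' _ _, BV.t _ _ => 1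
  | BV.s'' _ _, BV.t'' _ _ => 0
  | BV.s'' _ _, BV.t _ _ => 1
  | BV.s _ _, BV.t' _ _ => 0
  | BV.s _ _, BV.b _ => 1
  | BV.s _ _, BV.t'' _ _ => 2
  | BV.t' _ _, BV.s' _ _ => 0
  | BV.t' _ _, BV.s _ _ => 1
  | BV.t'' _ _, BV.s'' _ _ => 0
  | BV.t'' _ _, BV.s _ _ => 1
  | BV.t _ _, BV.s'' _ _ => 0
  | BV.t _ _, BV.a _ => 1
  | BV.t _ _, BV.s' _ _ => 2
  | BV.a' _, BV.b _ => 0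
  | BV.a' _, BV.b' _ => 1
  | BV.b' _, BV.a _ => 0
  | BV.b' _, BV.a' _ => 1
  | BV.a _, BV.b _ => 0
  | BV.a _, BV.b' _ => 1
  | BV.a _, BV.b0 => 2
  | BV.a _, BV.t _ j => 3 + j.val
  | BV.b _, BV.a _ => 0
  | BV.b _, BV.a' _ => 1
  | BV.b _, BV.a0 => 2
  | BV.b _, BV.s i _ => 3 + i.val
  | BV.a0, BV.b i => i.val
  | BV.b0, BV.a i => i.val
  | _, _ => 0

/-- The bipartite instance `G = (A ∪ B, E)` constructed from the vertex cover
instance `H`. -/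
def BGofH (H : SimpleGraph (Fin n)) : RoommatesInstance (BV n) where
  adj x y := x ≠ y ∧ (brel H x y ∨ brel H y x)
  adj_symm := fun _ _ h => ⟨h.1.symm, h.2.symm⟩
  adj_irrefl := fun _ h => h.1 rfl
  pref u v w :=
    (u ≠ v ∧ (brel H u v ∨ brel H v u)) ∧ (u ≠ w ∧ (brel H u w ∨ brel H w u)) ∧
      brank u v < brank u w

/-! If `M` matches `a_0` to `b_i`, or `b_0` to `a_i`, then `M(a_i) ≠ b_i`. Rematch the gadget `C_i`
as `a_i b'_i, a'_i b_i`, leaving unmatched every outside vertex whose partner lay in `C_i`. No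
vertex of `C_i` gets a worse partner, and every outside vertex that loses its partner was matched
to `a_i` or `b_i`, which then prefer the new matching. So `M` maps the voters for `M` injectively
to voters for the new matching, avoiding `a'_i` (in the first case) or `b'_i` (in the second),
which are voters too: `M` loses. -/

namespace RoommatesInstance

variable {V : Type} {G : RoommatesInstance V}

theorem Matching.m_eq_comm (M : G.Matching) {u v : V} : M.m u = v ↔ M.m v = u :=
  ⟨fun h => h ▸ M.invol u, fun h => h ▸ M.invol v⟩

theorem Better.ne (hirr : ∀ u v, ¬ G.pref u v v) {u v w : V} (h : G.Better u v w) :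
    v ≠ w := by
  rintro rfl
  rcases h with ⟨rfl, h⟩ | ⟨-, -, h⟩
  exacts [h rfl, hirr u v h]

noncomputable def Matching.patch (M N : G.Matching) (S : Set V) (hS : ∀ u ∈ S, N.m u ∈ S) :
    G.Matching where
  m u := if u ∈ S then N.m u else if M.m u ∈ S then u else M.m u
  invol u := by
    by_cases hu : u ∈ S
    · simp [hu, hS u hu, N.invol]
    by_cases hMu : M.m u ∈ S
    · simp [hu, hMu]
    · simp [hu, hMu, M.invol]
  adj_of_ne u := by
    split_ifs with hu hMu
    exacts [N.adj_of_ne u, fun h => absurd rfl h, M.adj_of_ne u]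

variable {M N : G.Matching} {S : Set V} {hS : ∀ u ∈ S, N.m u ∈ S} {u : V}

theorem Matching.patch_m_of_mem (hu : u ∈ S) : (M.patch N S hS).m u = N.m u :=
  if_pos hu

theorem Matching.patch_m_of_notMem (hu : u ∉ S) (hMu : M.m u ∉ S) :
    (M.patch N S hS).m u = M.m u := by
  simp [Matching.patch, hu, hMu]

theorem Matching.m_mem_of_prefers_patch (hirr : ∀ u v, ¬ G.pref u v v) (hu : u ∉ S)
    (h : G.Prefers M (M.patch N S hS) u) : M.m u ∈ S := by
  by_contra hMu
  exact h.ne hirr (Matching.patch_m_of_notMem hu hMu).symm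

theorem delta_neg_of_partner_prefers [Fintype V] (M M' : G.Matching) (w : V)
    (hvote : ∀ u, G.Prefers M M' u → G.Prefers M' M (M.m u) ∧ M.m u ≠ w)
    (hw : G.Prefers M' M w) : G.delta M M' < 0 := by
  set voters' := Finset.univ.filter fun u => G.Prefers M' M u
  have hle : G.phi M M' ≤ (voters'.erase w).card := by
    refine Finset.card_le_card_of_injOn M.m (fun u hu => ?_)
      (Function.Involutive.injective M.invol).injOn
    obtain ⟨hpref, hne⟩ := hvote u (Finset.mem_filter.mp hu).2
    simpa [voters', hne] using hpref
  have hlt : (voters'.erase w).card < G.phi M' M :=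
    Finset.card_erase_lt_of_mem (Finset.mem_filter.mpr ⟨Finset.mem_univ w, hw⟩)
  unfold delta
  omega

end RoommatesInstance

namespace BGofH

open RoommatesInstance

variable {H : SimpleGraph (Fin n)}

theorem pref_irrefl (u v : BV n) : ¬ (BGofH H).pref u v v :=
  fun h => lt_irrefl _ h.2.2

theorem better_iff {u v w : BV n} (hv : (BGofH H).adj u v) :
    (BGofH H).Better u w v ↔ (BGofH H).adj u w ∧ brank u w < brank u v := by
  have hvu : v ≠ u := fun h => hv.1 h.symm
  constructor
  · rintro (⟨h, -⟩ | ⟨-, -, hw, -, hlt⟩)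
    exacts [absurd h hvu, ⟨hw, hlt⟩]
  · rintro ⟨hw, hlt⟩
    exact Or.inr ⟨fun h => hw.1 h.symm, hvu, hw, hv, hlt⟩

theorem adj_a0_cases {y : BV n} (h : (BGofH H).adj BV.a0 y) : ∃ i, y = BV.b i := by
  obtain ⟨-, h | h⟩ := h <;> simp only [brel] at h <;> aesop

theorem adj_b0_cases {y : BV n} (h : (BGofH H).adj BV.b0 y) : ∃ i, y = BV.a i := by
  obtain ⟨-, h | h⟩ := h <;> simp only [brel] at h <;> aesop

theorem adj_a_cases {i : Fin n} {y : BV n} (h : (BGofH H).adj (BV.a i) y) :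
    y = BV.b i ∨ y = BV.b' i ∨ y = BV.b0 ∨ ∃ j, y = BV.t i j := by
  obtain ⟨-, h | h⟩ := h <;> simp only [brel] at h <;> aesop

theorem adj_b_cases {i : Fin n} {y : BV n} (h : (BGofH H).adj (BV.b i) y) :
    y = BV.a i ∨ y = BV.a' i ∨ y = BV.a0 ∨ ∃ j, y = BV.s j i := by
  obtain ⟨-, h | h⟩ := h <;> simp only [brel] at h <;> aesop

theorem adj_a'_cases {i : Fin n} {y : BV n} (h : (BGofH H).adj (BV.a' i) y) :
    y = BV.b i ∨ y = BV.b' i := by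
  obtain ⟨-, h | h⟩ := h <;> simp only [brel] at h <;> aesop

theorem adj_b'_cases {i : Fin n} {y : BV n} (h : (BGofH H).adj (BV.b' i) y) :
    y = BV.a i ∨ y = BV.a' i := by
  obtain ⟨-, h | h⟩ := h <;> simp only [brel] at h <;> aesop

theorem adj_a_b' (i : Fin n) : (BGofH H).adj (BV.a i) (BV.b' i) :=
  ⟨by simp, Or.inl (by simp [brel])⟩

theorem adj_a'_b (i : Fin n) : (BGofH H).adj (BV.a' i) (BV.b i) :=
  ⟨by simp, Or.inl (by simp [brel])⟩

/-- The vertex set of the gadget `C_i`. -/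
def gadget (i : Fin n) : Set (BV n) := {BV.a i, BV.a' i, BV.b i, BV.b' i}

def gadgetPartner (i : Fin n) (u : BV n) : BV n :=
  if u = BV.a i then BV.b' i
  else if u = BV.b' i then BV.a i
  else if u = BV.a' i then BV.b i
  else if u = BV.b i then BV.a' i
  else u

def gadgetMatching (H : SimpleGraph (Fin n)) (i : Fin n) : (BGofH H).Matching where
  m := gadgetPartner i
  invol u := by unfold gadgetPartner; split_ifs <;> simp_all
  adj_of_ne u := by
    unfold gadgetPartner
    split_ifs <;> subst_vars <;> intro h
    exacts [adj_a_b' i, (BGofH H).adj_symm _ _ (adj_a_b' i), adj_a'_b i,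
      (BGofH H).adj_symm _ _ (adj_a'_b i), absurd rfl h]

noncomputable def rematch (M : (BGofH H).Matching) (i : Fin n) : (BGofH H).Matching :=
  M.patch (gadgetMatching H i) (gadget i) (by
    intro u hu
    simp only [gadget, Set.mem_insert_iff, Set.mem_singleton_iff] at hu
    rcases hu with rfl | rfl | rfl | rfl <;> simp [gadget, gadgetMatching, gadgetPartner])

variable (M : (BGofH H).Matching) (i : Fin n)

theorem rematch_m_of_mem {u : BV n} (hu : u ∈ gadget i) :
    (rematch M i).m u = gadgetPartner i u :=
  Matching.patch_m_of_mem hu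

theorem rematch_m_a : (rematch M i).m (BV.a i) = BV.b' i := by
  rw [rematch_m_of_mem M i (by simp [gadget])]
  simp [gadgetPartner]

theorem rematch_m_a' : (rematch M i).m (BV.a' i) = BV.b i := by
  rw [rematch_m_of_mem M i (by simp [gadget])]
  simp [gadgetPartner]

theorem rematch_m_b : (rematch M i).m (BV.b i) = BV.a' i := by
  rw [rematch_m_of_mem M i (by simp [gadget])]
  simp [gadgetPartner]

theorem rematch_m_b' : (rematch M i).m (BV.b' i) = BV.a i := by
  rw [rematch_m_of_mem M i (by simp [gadget])]
  simp [gadgetPartner]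

theorem not_prefers_rematch_of_mem (hab : M.m (BV.a i) ≠ BV.b i) {u : BV n}
    (hu : u ∈ gadget i) : ¬ (BGofH H).Prefers M (rematch M i) u := by
  simp only [gadget, Set.mem_insert_iff, Set.mem_singleton_iff] at hu
  rcases hu with rfl | rfl | rfl | rfl <;> simp only [Prefers, rematch_m_a, rematch_m_a',
    rematch_m_b, rematch_m_b']
  · rw [better_iff (adj_a_b' i)]
    rintro ⟨hy, hlt⟩
    rcases adj_a_cases hy with h | h | h | ⟨j, h⟩ <;> rw [h] at hlt
    exacts [hab h, lt_irrefl _ hlt, by simp [brank] at hlt, by simp [brank] at hlt]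
  · rw [better_iff (adj_a'_b i)]
    exact fun h => Nat.not_lt_zero _ h.2
  · rw [better_iff ((BGofH H).adj_symm _ _ (adj_a'_b i))]
    rintro ⟨hy, hlt⟩
    rcases adj_b_cases hy with h | h | h | ⟨j, h⟩ <;> rw [h] at hlt
    exacts [hab (M.m_eq_comm.mp h), lt_irrefl _ hlt, by simp [brank] at hlt,
      by simp [brank] at hlt]
  · rw [better_iff ((BGofH H).adj_symm _ _ (adj_a_b' i))]
    exact fun h => Nat.not_lt_zero _ h.2

theorem prefers_rematch_partner (hab : M.m (BV.a i) ≠ BV.b i) {u : BV n}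
    (h : (BGofH H).Prefers M (rematch M i) u) :
    (BGofH H).Prefers (rematch M i) M (M.m u) ∧ (M.m u = BV.a i ∨ M.m u = BV.b i) := by
  have hu : u ∉ gadget i := fun hu => not_prefers_rematch_of_mem M i hab hu h
  have hMu : M.m u ∈ gadget i := Matching.m_mem_of_prefers_patch pref_irrefl hu h
  have hadj : (BGofH H).adj (M.m u) u :=
    (BGofH H).adj_symm _ _ (M.adj_of_ne u (ne_of_mem_of_not_mem hMu hu))
  simp only [gadget, Set.mem_insert_iff, Set.mem_singleton_iff, not_or] at hMu hu
  unfold Prefers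
  rw [M.invol]
  rcases hMu with h | h | h | h <;> rw [h] at hadj ⊢
  · refine ⟨?_, Or.inl rfl⟩
    rw [rematch_m_a, better_iff hadj]
    refine ⟨adj_a_b' i, ?_⟩
    rcases adj_a_cases hadj with rfl | rfl | rfl | ⟨j, rfl⟩
    exacts [absurd rfl hu.2.2.1, absurd rfl hu.2.2.2, by simp [brank],
      by simp only [brank]; omega]
  · rcases adj_a'_cases hadj with rfl | rfl
    exacts [absurd rfl hu.2.2.1, absurd rfl hu.2.2.2]
  · refine ⟨?_, Or.inr rfl⟩
    rw [rematch_m_b, better_iff hadj]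
    refine ⟨(BGofH H).adj_symm _ _ (adj_a'_b i), ?_⟩
    rcases adj_b_cases hadj with rfl | rfl | rfl | ⟨j, rfl⟩
    exacts [absurd rfl hu.1, absurd rfl hu.2.1, by simp [brank],
      by simp only [brank]; omega]
  · rcases adj_b'_cases hadj with rfl | rfl
    exacts [absurd rfl hu.1, absurd rfl hu.2.1]

theorem not_popular_of_prefers_rematch (hab : M.m (BV.a i) ≠ BV.b i) {w : BV n}
    (hw : w = BV.a' i ∨ w = BV.b' i) (hpref : (BGofH H).Prefers (rematch M i) M w) :
    ¬ (BGofH H).Popular M := by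
  refine fun hM => (hM _).not_gt (delta_neg_of_partner_prefers _ _ w (fun u h => ?_) hpref)
  obtain ⟨hvote, hMu⟩ := prefers_rematch_partner M i hab h
  refine ⟨hvote, ?_⟩
  rcases hw with rfl | rfl <;> rcases hMu with h | h <;> simp [h]

theorem prefers_rematch_a' (h : M.m (BV.a' i) ≠ BV.b i) :
    (BGofH H).Prefers (rematch M i) M (BV.a' i) := by
  unfold Prefers
  rw [rematch_m_a']
  by_cases hu : M.m (BV.a' i) = BV.a' i
  · exact Or.inl ⟨hu, by simp⟩
  have hadj := M.adj_of_ne _ hu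
  rw [better_iff hadj]
  refine ⟨adj_a'_b i, ?_⟩
  rcases adj_a'_cases hadj with h' | h'
  exacts [absurd h' h, h' ▸ Nat.zero_lt_one]

theorem prefers_rematch_b' (h : M.m (BV.b' i) ≠ BV.a i) :
    (BGofH H).Prefers (rematch M i) M (BV.b' i) := by
  unfold Prefers
  rw [rematch_m_b']
  by_cases hu : M.m (BV.b' i) = BV.b' i
  · exact Or.inl ⟨hu, by simp⟩
  have hadj := M.adj_of_ne _ hu
  rw [better_iff hadj]
  refine ⟨(BGofH H).adj_symm _ _ (adj_a_b' i), ?_⟩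
  rcases adj_b'_cases hadj with h' | h'
  exacts [absurd h' h, h' ▸ Nat.zero_lt_one]

end BGofH

open RoommatesInstance in
/-- No popular matching in `G` matches `a_0`, and no popular
matching in `G` matches `b_0`. -/
theorem popular_leaves_a0_b0_unmatched {n : ℕ} (H : SimpleGraph (Fin n))
    (M : (BGofH H).Matching) (hM : (BGofH H).Popular M) :
    M.m BV.a0 = BV.a0 ∧ M.m BV.b0 = BV.b0 := by
  constructor
  · by_contra h
    obtain ⟨i, hi⟩ := BGofH.adj_a0_cases (M.adj_of_ne _ h)
    have hb : M.m (BV.b i) = BV.a0 := M.m_eq_comm.mp hi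
    have hb_ne {u : BV n} (hu : u ≠ BV.a0) : M.m u ≠ BV.b i := fun h =>
      hu (by rw [← hb, M.m_eq_comm.mp h])
    exact BGofH.not_popular_of_prefers_rematch M i (hb_ne (by simp)) (Or.inl rfl)
      (BGofH.prefers_rematch_a' M i (hb_ne (by simp))) hM
  · by_contra h
    obtain ⟨i, hi⟩ := BGofH.adj_b0_cases (M.adj_of_ne _ h)
    have ha : M.m (BV.a i) = BV.b0 := M.m_eq_comm.mp hi
    have hb' : M.m (BV.b' i) ≠ BV.a i := fun h => by simp [M.m_eq_comm.mp h] at ha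
    exact BGofH.not_popular_of_prefers_rematch M i (by simp [ha]) (Or.inr rfl)
      (BGofH.prefers_rematch_b' M i hb') hM
end

section
/- Let H = ([n_H], E_H) be a graph and G = (A ∪ B, E) the bipartite instance constructed from H as described. For every popular matching N in G and every i ∈ [n_H]: either both (a_i,b_i) and (a'_i,b'_i) are in N, or both (a_i,b'_i) and (a'_i,b_i) are in N. -/
open scoped Classical

variable {n : ℕ}

/-! The vertices `a'_i` and `b'_i` have no neighbours outside `C_i`, and `a_i` (resp. `b_i`)
ranks `b'_i` (resp. `a'_i`) above every neighbour outside `C_i`. Hence every other configuration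
of `N` on `C_i` loses to a matching obtained by re-matching inside `C_i`:
* `a'_i`, `b'_i` both unmatched: add `(a'_i, b'_i)`; two vertices gain and nobody loses;
* `(a'_i, b_i) ∈ N` with `b'_i` unmatched: add `(a_i, b'_i)`; `a_i` and `b'_i` gain and only the
  old partner of `a_i` loses (the case `(a_i, b'_i) ∈ N`, `a'_i` unmatched is the mirror image);
* `(a'_i, b'_i) ∈ N` but `(a_i, b_i) ∉ N`: switch to `(a_i, b'_i), (a'_i, b_i)`; all four vertices
  of `C_i` gain and only the old partners of `a_i` and `b_i` lose. -/

namespace RoommatesInstance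

variable {V : Type} {G : RoommatesInstance V}

def AsymmPrefs (G : RoommatesInstance V) : Prop :=
  ∀ u v w, G.pref u v w → ¬ G.pref u w v

theorem better_of_pref {u v w : V} (hv : v ≠ u) (h : w ≠ u → G.pref u v w) :
    G.Better u v w := by
  by_cases hw : w = u
  · exact Or.inl ⟨hw, hv⟩
  · exact Or.inr ⟨hv, hw, h hw⟩

theorem better_unmatched {u v : V} (hv : v ≠ u) : G.Better u v u := Or.inl ⟨rfl, hv⟩

theorem Better.asymm (hG : G.AsymmPrefs) {u v w : V} (h : G.Better u v w) :
    ¬ G.Better u w v := by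
  rcases h with ⟨rfl, hv⟩ | ⟨hv, hw, h⟩ <;> rintro (⟨rfl, hw⟩ | ⟨hw', hv', h'⟩)
  exacts [hw rfl, hw' rfl, hv rfl, hG _ _ _ h h']

theorem better_irrefl (hG : G.AsymmPrefs) (u v : V) : ¬ G.Better u v v :=
  fun h => h.asymm hG h

namespace Matching

theorem m_eq_comm_s13 (M : G.Matching) {x y : V} : M.m x = y ↔ M.m y = x :=
  ⟨fun h => h ▸ M.invol x, fun h => h ▸ M.invol y⟩

def insertEdge [DecidableEq V] (M : G.Matching) (u v : V) (huv : G.adj u v) : G.Matching where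
  m w := if w = u then v else if w = v then u else if M.m w = u ∨ M.m w = v then w else M.m w
  invol w := by
    have hne : u ≠ v := fun h => G.adj_irrefl u (h ▸ huv)
    have := M.invol w
    split_ifs <;> grind
  adj_of_ne w := by
    have := M.adj_of_ne w
    have := G.adj_symm u v huv
    split_ifs <;> grind

variable [DecidableEq V] (M : G.Matching) {u v : V} (huv : G.adj u v)

@[simp] theorem insertEdge_m_left : (M.insertEdge u v huv).m u = v := if_pos rfl

@[simp] theorem insertEdge_m_right : (M.insertEdge u v huv).m v = u := by
  have hne : v ≠ u := fun h => G.adj_irrefl u (h ▸ huv)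
  simp [insertEdge, hne]

theorem insertEdge_m_of_ne {w : V} (hu : w ≠ u) (hv : w ≠ v) (hmu : M.m w ≠ u)
    (hmv : M.m w ≠ v) : (M.insertEdge u v huv).m w = M.m w := by
  simp [insertEdge, hu, hv, hmu, hmv]

theorem insertEdge_m_ne_cases {w : V} (h : (M.insertEdge u v huv).m w ≠ M.m w) :
    w = u ∨ w = v ∨ w = M.m u ∨ w = M.m v := by
  by_contra! hw
  obtain ⟨hu, hv, hmu, hmv⟩ := hw
  exact h (M.insertEdge_m_of_ne huv hu hv (fun e => hmu (M.m_eq_comm_s13.1 e).symm)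
    (fun e => hmv (M.m_eq_comm_s13.1 e).symm))

end Matching

theorem Popular.card_le_card [Fintype V] (hG : G.AsymmPrefs) {N : G.Matching}
    (hN : G.Popular N) (M : G.Matching) {W L : Finset V} (hW : ∀ u ∈ W, G.Prefers M N u)
    (hL : ∀ u, M.m u ≠ N.m u → u ∉ W → u ∈ L) : W.card ≤ L.card := by
  have hlosers : (Finset.univ.filter fun u => G.Prefers N M u) ⊆ L := by
    intro u hu
    have hu : G.Better u (N.m u) (M.m u) := (Finset.mem_filter.1 hu).2
    exact hL u (fun he => better_irrefl hG u _ (he ▸ hu)) fun huW => (hW u huW).asymm hG hu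
  have hwinners : W ⊆ (Finset.univ.filter fun u => G.Prefers M N u) :=
    fun u hu => Finset.mem_filter.2 ⟨Finset.mem_univ u, hW u hu⟩
  have := hN M
  have := Finset.card_le_card hlosers
  have := Finset.card_le_card hwinners
  unfold delta phi at *
  omega

/-- The gadget `C_i`, with `a b a' b'` in the roles of `a_i b_i a'_i b'_i`. -/
structure IsCGadget (G : RoommatesInstance V) (a b a' b' : V) : Prop where
  adj_a_b : G.adj a b
  adj_a_b' : G.adj a b'
  adj_a'_b : G.adj a' b
  adj_a'_b' : G.adj a' b'
  adj_a'_cases : ∀ w, G.adj a' w → w = b ∨ w = b'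
  adj_b'_cases : ∀ w, G.adj b' w → w = a ∨ w = a'
  pref_a'_b_b' : G.pref a' b b'
  pref_b'_a_a' : G.pref b' a a'
  pref_a_b'_of_adj : ∀ w, G.adj a w → w ≠ b → w ≠ b' → G.pref a b' w
  pref_b_a'_of_adj : ∀ w, G.adj b w → w ≠ a → w ≠ a' → G.pref b a' w

namespace IsCGadget

variable {a b a' b' : V} (hC : G.IsCGadget a b a' b')
include hC

theorem symm : G.IsCGadget b a b' a' where
  adj_a_b := G.adj_symm _ _ hC.adj_a_b
  adj_a_b' := G.adj_symm _ _ hC.adj_a'_b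
  adj_a'_b := G.adj_symm _ _ hC.adj_a_b'
  adj_a'_b' := G.adj_symm _ _ hC.adj_a'_b'
  adj_a'_cases := hC.adj_b'_cases
  adj_b'_cases := hC.adj_a'_cases
  pref_a'_b_b' := hC.pref_b'_a_a'
  pref_b'_a_a' := hC.pref_a'_b_b'
  pref_a_b'_of_adj := hC.pref_b_a'_of_adj
  pref_b_a'_of_adj := hC.pref_a_b'_of_adj

theorem ne_a_b : a ≠ b := fun h => G.adj_irrefl a (h ▸ hC.adj_a_b)
theorem ne_a_b' : a ≠ b' := fun h => G.adj_irrefl a (h ▸ hC.adj_a_b')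
theorem ne_a'_b : a' ≠ b := fun h => G.adj_irrefl a' (h ▸ hC.adj_a'_b)
theorem ne_a'_b' : a' ≠ b' := fun h => G.adj_irrefl a' (h ▸ hC.adj_a'_b')

theorem ne_a_a' (hG : G.AsymmPrefs) : a ≠ a' :=
  fun h => hG _ _ _ hC.pref_b'_a_a' (h ▸ hC.pref_b'_a_a')

theorem ne_b_b' (hG : G.AsymmPrefs) : b ≠ b' :=
  fun h => hG _ _ _ hC.pref_a'_b_b' (h ▸ hC.pref_a'_b_b')

theorem better_b'_at_a (N : G.Matching) (hb : N.m a ≠ b) (hb' : N.m a ≠ b') :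
    G.Better a b' (N.m a) :=
  better_of_pref hC.ne_a_b'.symm fun h => hC.pref_a_b'_of_adj _ (N.adj_of_ne a h) hb hb'

variable (hG : G.AsymmPrefs) [Fintype V] [DecidableEq V] {N : G.Matching} (hN : G.Popular N)
include hG hN

theorem not_both_unmatched_of_popular : ¬ (N.m a' = a' ∧ N.m b' = b') := by
  rintro ⟨ha', hb'⟩
  let M := N.insertEdge a' b' hC.adj_a'_b'
  have hwin : ∀ u ∈ ({a', b'} : Finset V), G.Prefers M N u := by
    simp only [Finset.mem_insert, Finset.mem_singleton, forall_eq_or_imp, forall_eq]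
    refine ⟨?_, ?_⟩
    · show G.Better a' (M.m a') (N.m a')
      rw [N.insertEdge_m_left, ha']
      exact better_unmatched hC.ne_a'_b'.symm
    · show G.Better b' (M.m b') (N.m b')
      rw [N.insertEdge_m_right, hb']
      exact better_unmatched hC.ne_a'_b'
  have hcard := hN.card_le_card hG M hwin (L := ∅) fun u hu huW => by
    have := N.insertEdge_m_ne_cases _ hu
    simp_all
  simp [Finset.card_pair hC.ne_a'_b'] at hcard

theorem matched_b'_of_popular (h : N.m a' = b) : N.m b' ≠ b' := by
  intro hb'
  have hNb : N.m b = a' := N.m_eq_comm_s13.1 h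
  have hNa_b : N.m a ≠ b := fun e => hC.ne_a_a' hG ((N.m_eq_comm_s13.1 e).symm.trans hNb)
  have hNa_b' : N.m a ≠ b' := fun e => hC.ne_a_b' ((N.m_eq_comm_s13.1 e).symm.trans hb')
  let M := N.insertEdge a b' hC.adj_a_b'
  have hwin : ∀ u ∈ ({a, b'} : Finset V), G.Prefers M N u := by
    simp only [Finset.mem_insert, Finset.mem_singleton, forall_eq_or_imp, forall_eq]
    refine ⟨?_, ?_⟩
    · show G.Better a (M.m a) (N.m a)
      rw [N.insertEdge_m_left]
      exact hC.better_b'_at_a N hNa_b hNa_b'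
    · show G.Better b' (M.m b') (N.m b')
      rw [N.insertEdge_m_right, hb']
      exact better_unmatched hC.ne_a_b'
  have hcard := hN.card_le_card hG M hwin (L := {N.m a}) fun u hu huW => by
    have := N.insertEdge_m_ne_cases _ hu
    simp_all
  simp [Finset.card_pair hC.ne_a_b'] at hcard

theorem m_a_eq_b_of_popular (h : N.m a' = b') : N.m a = b := by
  by_contra hNa_b
  have hNb' : N.m b' = a' := N.m_eq_comm_s13.1 h
  have hNa_b' : N.m a ≠ b' := fun e => hC.ne_a_a' hG ((N.m_eq_comm_s13.1 e).symm.trans hNb')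
  have hNb_a : N.m b ≠ a := fun e => hNa_b (N.m_eq_comm_s13.1 e)
  have hNb_a' : N.m b ≠ a' := fun e => hC.ne_b_b' hG ((N.m_eq_comm_s13.1 e).symm.trans h)
  let M₁ := N.insertEdge a b' hC.adj_a_b'
  let M := M₁.insertEdge a' b hC.adj_a'_b
  have hM₁a : M₁.m a = b' := N.insertEdge_m_left _
  have hM₁b' : M₁.m b' = a := N.insertEdge_m_right _
  have hMa : M.m a = b' := by
    rw [M₁.insertEdge_m_of_ne _ (hC.ne_a_a' hG) hC.ne_a_b (hM₁a ▸ hC.ne_a'_b'.symm)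
      (hM₁a ▸ (hC.ne_b_b' hG).symm), hM₁a]
  have hMb' : M.m b' = a := by
    rw [M₁.insertEdge_m_of_ne _ hC.ne_a'_b'.symm (hC.ne_b_b' hG).symm
      (hM₁b' ▸ hC.ne_a_a' hG) (hM₁b' ▸ hC.ne_a_b), hM₁b']
  have hwin : ∀ u ∈ ({a, b', a', b} : Finset V), G.Prefers M N u := by
    simp only [Finset.mem_insert, Finset.mem_singleton, forall_eq_or_imp, forall_eq]
    refine ⟨?_, ?_, ?_, ?_⟩
    · show G.Better a (M.m a) (N.m a)
      rw [hMa]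
      exact hC.better_b'_at_a N hNa_b hNa_b'
    · show G.Better b' (M.m b') (N.m b')
      rw [hMb', hNb']
      exact better_of_pref hC.ne_a_b' fun _ => hC.pref_b'_a_a'
    · show G.Better a' (M.m a') (N.m a')
      rw [M₁.insertEdge_m_left, h]
      exact better_of_pref hC.ne_a'_b.symm fun _ => hC.pref_a'_b_b'
    · show G.Better b (M.m b) (N.m b)
      rw [M₁.insertEdge_m_right]
      exact hC.symm.better_b'_at_a N hNb_a hNb_a'
  have hlose : ∀ u, M.m u ≠ N.m u → u ∉ ({a, b', a', b} : Finset V) →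
      u ∈ ({N.m a, N.m b} : Finset V) := by
    intro u hu huW
    simp only [Finset.mem_insert, Finset.mem_singleton, not_or] at huW ⊢
    obtain ⟨hua, hub', hua', hub⟩ := huW
    by_cases h₁ : M₁.m u = N.m u
    · rcases M₁.insertEdge_m_ne_cases _ (fun e => hu (e.trans h₁)) with rfl | rfl | e | e
      · exact absurd rfl hua'
      · exact absurd rfl hub
      · exact absurd ((N.m_eq_comm_s13.1 (h₁ ▸ M₁.m_eq_comm_s13.1 e.symm)).symm.trans h) hub'
      · exact Or.inr (N.m_eq_comm_s13.1 (h₁ ▸ M₁.m_eq_comm_s13.1 e.symm)).symm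
    · rcases N.insertEdge_m_ne_cases _ h₁ with rfl | rfl | e | e
      · exact absurd rfl hua
      · exact absurd rfl hub'
      · exact Or.inl e
      · exact absurd (e.trans hNb') hua'
  have hcard := hN.card_le_card hG M hwin hlose
  have h4 : ({a, b', a', b} : Finset V).card = 4 := by
    simp [Finset.card_insert_of_notMem, hC.ne_a_b', hC.ne_a_a' hG, hC.ne_a_b, hC.ne_a'_b'.symm,
      (hC.ne_b_b' hG).symm, hC.ne_a'_b]
  have := Finset.card_le_two (a := N.m a) (b := N.m b)
  omega

theorem popular_cases : (N.m a = b ∧ N.m a' = b') ∨ (N.m a = b' ∧ N.m a' = b) := by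
  by_cases ha' : N.m a' = a'
  · exfalso
    have hb' : N.m b' ≠ b' := fun hb' => hC.not_both_unmatched_of_popular hG hN ⟨ha', hb'⟩
    rcases hC.adj_b'_cases _ (N.adj_of_ne _ hb') with e | e
    · exact hC.symm.matched_b'_of_popular hG hN e ha'
    · exact hC.ne_a'_b' ((N.m_eq_comm_s13.1 e).symm.trans ha').symm
  · rcases hC.adj_a'_cases _ (N.adj_of_ne _ ha') with e | e
    · refine Or.inr ⟨?_, e⟩
      rcases hC.adj_b'_cases _ (N.adj_of_ne _ (hC.matched_b'_of_popular hG hN e)) with e' | e'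
      · exact N.m_eq_comm_s13.1 e'
      · exact absurd ((N.m_eq_comm_s13.1 e').symm.trans e) (hC.ne_b_b' hG).symm
    · exact Or.inl ⟨hC.m_a_eq_b_of_popular hG hN e, e⟩

end IsCGadget

end RoommatesInstance

section BGofH

open RoommatesInstance

variable {H : SimpleGraph (Fin n)} {i : Fin n}

theorem BGofH_pref_iff {u v w : BV n} :
    (BGofH H).pref u v w ↔ (BGofH H).adj u v ∧ (BGofH H).adj u w ∧ brank u v < brank u w :=
  Iff.rfl

theorem asymmPrefs_BGofH : (BGofH H).AsymmPrefs := fun _ _ _ h h' =>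
  lt_asymm (BGofH_pref_iff.1 h).2.2 (BGofH_pref_iff.1 h').2.2

theorem BGofH_adj_a_cases {w : BV n} (h : (BGofH H).adj (BV.a i) w) :
    w = BV.b i ∨ w = BV.b' i ∨ w = BV.b0 ∨ ∃ j, w = BV.t i j := by
  obtain ⟨-, h | h⟩ := h <;> simp only [brel] at h <;> aesop

theorem BGofH_adj_b_cases {w : BV n} (h : (BGofH H).adj (BV.b i) w) :
    w = BV.a i ∨ w = BV.a' i ∨ w = BV.a0 ∨ ∃ j, w = BV.s j i := by
  obtain ⟨-, h | h⟩ := h <;> simp only [brel] at h <;> aesop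

theorem BGofH_adj_a'_cases {w : BV n} (h : (BGofH H).adj (BV.a' i) w) :
    w = BV.b i ∨ w = BV.b' i := by
  obtain ⟨-, h | h⟩ := h <;> simp only [brel] at h <;> aesop

theorem BGofH_adj_b'_cases {w : BV n} (h : (BGofH H).adj (BV.b' i) w) :
    w = BV.a i ∨ w = BV.a' i := by
  obtain ⟨-, h | h⟩ := h <;> simp only [brel] at h <;> aesop

theorem isCGadget_BGofH (i : Fin n) :
    (BGofH H).IsCGadget (BV.a i) (BV.b i) (BV.a' i) (BV.b' i) where
  adj_a_b := by simp [BGofH, brel]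
  adj_a_b' := by simp [BGofH, brel]
  adj_a'_b := by simp [BGofH, brel]
  adj_a'_b' := by simp [BGofH, brel]
  adj_a'_cases _ := BGofH_adj_a'_cases
  adj_b'_cases _ := BGofH_adj_b'_cases
  pref_a'_b_b' := BGofH_pref_iff.2 ⟨by simp [BGofH, brel], by simp [BGofH, brel], by simp [brank]⟩
  pref_b'_a_a' := BGofH_pref_iff.2 ⟨by simp [BGofH, brel], by simp [BGofH, brel], by simp [brank]⟩
  pref_a_b'_of_adj w h hb hb' := by
    refine BGofH_pref_iff.2 ⟨by simp [BGofH, brel], h, ?_⟩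
    rcases BGofH_adj_a_cases h with rfl | rfl | rfl | ⟨j, rfl⟩
    · exact absurd rfl hb
    · exact absurd rfl hb'
    all_goals simp only [brank]; omega
  pref_b_a'_of_adj w h ha ha' := by
    refine BGofH_pref_iff.2 ⟨by simp [BGofH, brel], h, ?_⟩
    rcases BGofH_adj_b_cases h with rfl | rfl | rfl | ⟨j, rfl⟩
    · exact absurd rfl ha
    · exact absurd rfl ha'
    all_goals simp only [brank]; omega

end BGofH

open RoommatesInstance in
/-- For every popular matching `N` in `G` and every `i`: either
`(a_i,b_i), (a'_i,b'_i) ∈ N`, or `(a_i,b'_i), (a'_i,b_i) ∈ N`. -/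
theorem popular_structure_on_Ci {n : ℕ} (H : SimpleGraph (Fin n))
    (N : (BGofH H).Matching) (hN : (BGofH H).Popular N) (i : Fin n) :
    (N.m (BV.a i) = BV.b i ∧ N.m (BV.a' i) = BV.b' i) ∨
      (N.m (BV.a i) = BV.b' i ∧ N.m (BV.a' i) = BV.b i) :=
  (isCGadget_BGofH i).popular_cases asymmPrefs_BGofH hN
end

section
/- Let H = ([n_H], E_H) be a graph, G = (A ∪ B, E) the bipartite instance constructed from H as described, and w the described edge weights on G. Let N be a popular matching in G of maximum weight among all popular matchings, and let α ∈ {0,±1}^{A∪B} be a witness of N. Then the set U_N = {i ∈ [n_H] : α_u ∈ {−1,+1} for all vertices u of the gadget C_i} is a vertex cover of H. -/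
open scoped Classical

namespace RoommatesInstance

variable {V : Type} (G : RoommatesInstance V)

/-- A witness of the popularity of `M`: an optimal dual solution, i.e. a vector `α`
with `Σ_u α_u = 0`, `α_u + α_v ≥ cost_M(u,v)` for every edge `(u,v)` and
`α_u ≥ cost_M(u,u)` for every vertex `u`. -/
def IsWitness [Fintype V] (M : G.Matching) (α : V → ℝ) : Prop :=
  (∑ u, α u) = 0 ∧
  (∀ u v, G.adj u v → (G.cost M u v : ℝ) ≤ α u + α v) ∧
  (∀ u, (G.cost M u u : ℝ) ≤ α u)

/-- `(u,v)` is a popular edge: it belongs to some popular matching of `G`. -/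
def PopularEdge [Fintype V] (u v : V) : Prop :=
  u ≠ v ∧ ∃ N : G.Matching, G.Popular N ∧ N.m u = v

/-- `u` is an unstable vertex: it is left unmatched in some stable matching of `G`. -/
def Unstable (u : V) : Prop :=
  ∃ S : G.Matching, G.Stable S ∧ S.m u = u

/-- `u` and `v` lie in the same connected component of the popular subgraph `F_G`
(the subgraph of `G` on the popular edges). -/
def PopConn [Fintype V] : V → V → Prop :=
  Relation.ReflTransGen (G.PopularEdge)

end RoommatesInstance

variable {n : ℕ}

/-- The edges of `G` of weight `2` (listed in one direction each):
`(s_e,t'_e), (s_e,t''_e), (s'_e,t_e), (s''_e,t_e)` for every `e ∈ E_H`, and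
`(a_i,b_i), (a'_i,b'_i)` for every `i`; all other edges have weight `1`. -/
def wspecial : BV n → BV n → Prop := fun x y =>
  (∃ i j, x = BV.s i j ∧ (y = BV.t' i j ∨ y = BV.t'' i j)) ∨
  (∃ i j, x = BV.t i j ∧ (y = BV.s' i j ∨ y = BV.s'' i j)) ∨
  (∃ i, x = BV.a i ∧ y = BV.b i) ∨
  (∃ i, x = BV.a' i ∧ y = BV.b' i)

/-- The weight function `w : E → {1,2}` on the edges of `G`. -/
noncomputable def wgt : BV n → BV n → ℕ := fun x y =>
  if wspecial x y ∨ wspecial y x then 2 else 1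

/-- Twice the weight `w(M)` of a matching `M` of `G`: each edge `(u,v) ∈ M`
contributes `w(u,v)` once for `u` and once for `v`. -/
noncomputable def mwt (H : SimpleGraph (Fin n)) (M : (BGofH H).Matching) : ℕ :=
  ∑ u ∈ Finset.univ.filter (fun u => M.m u ≠ u), wgt u (M.m u)

namespace RoommatesInstance

variable {V : Type} (G : RoommatesInstance V)

lemma better_asym (hasym : ∀ u v w, G.pref u v w → G.pref u w v → False)
    {u x y : V} (h1 : G.Better u x y) (h2 : G.Better u y x) : False := by
  rcases h1 with ⟨hy, hx⟩ | ⟨hx, hy, hp⟩ <;> rcases h2 with ⟨hx', hy'⟩ | ⟨hy', hx', hp'⟩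
  · exact hx hx'
  · exact hy' hy
  · exact hx hx'
  · exact hasym u x y hp hp'

lemma better_total (htot : ∀ u v w, G.adj u v → G.adj u w → v ≠ w → G.pref u v w ∨ G.pref u w v)
    {u v : V} (M : G.Matching) (hadj : G.adj u v) (hne : M.m u ≠ v)
    (h : ¬ G.Better u v (M.m u)) : G.Better u (M.m u) v := by
  have huv : v ≠ u := fun h' => G.adj_irrefl u (h' ▸ hadj)
  by_cases hm : M.m u = u
  · exact absurd (Or.inl ⟨hm, huv⟩) h
  · have hadj' : G.adj u (M.m u) := M.adj_of_ne u hm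
    rcases htot u v (M.m u) hadj hadj' (fun h' => hne h'.symm) with hp | hp
    · exact absurd (Or.inr ⟨huv, hm, hp⟩) h
    · exact Or.inr ⟨hm, huv, hp⟩

variable [Fintype V] in
theorem popular_of_witness
    (hasym : ∀ u v w, G.pref u v w → G.pref u w v → False)
    (htot : ∀ u v w, G.adj u v → G.adj u w → v ≠ w → G.pref u v w ∨ G.pref u w v)
    (M : G.Matching) (α : V → ℝ) (hw : G.IsWitness M α) : G.Popular M := by
  intro M'
  -- f u = [prefers M'] - [prefers M]
  set f : V → ℝ := fun u =>
    (if G.Prefers M' M u then (1:ℝ) else 0) - (if G.Prefers M M' u then (1:ℝ) else 0) with hf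
  have hsumf : ∑ u, f u = (G.phi M' M : ℝ) - (G.phi M M' : ℝ) := by
    rw [Finset.sum_sub_distrib]
    unfold phi
    rw [Finset.sum_boole, Finset.sum_boole]
  have key : ∀ u, f u + f (M'.m u) ≤ α u + α (M'.m u) := by
    intro u
    by_cases hne : M'.m u = u
    · rw [hne]
      have h1 : ¬ G.Prefers M' M u := by
        unfold Prefers; rw [hne]
        rintro (⟨h, h'⟩ | ⟨h', h, hp⟩)
        · exact h' rfl
        · exact h' rfl
      have h2 : (G.cost M u u : ℝ) ≤ α u := hw.2.2 u
      by_cases hmu : M.m u = u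
      · have h3 : ¬ G.Prefers M M' u := by
          unfold Prefers; rw [hne, hmu]
          rintro (⟨h, h'⟩ | ⟨h', h, hp⟩)
          · exact h' rfl
          · exact h' rfl
        simp only [hf, if_neg h1, if_neg h3]
        have : (G.cost M u u : ℝ) = 0 := by unfold cost; simp [hmu]
        linarith
      · have : (G.cost M u u : ℝ) = -1 := by
          unfold cost; rw [if_pos rfl, if_neg hmu]; norm_num
        have hfu : f u ≤ -1 + 1 - 1 := by
          simp only [hf]
          have : (if G.Prefers M' M u then (1:ℝ) else 0) = 0 := if_neg h1
          rw [this]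
          by_cases h3 : G.Prefers M M' u
          · rw [if_pos h3]; norm_num
          · exfalso
            apply h3
            unfold Prefers; rw [hne]
            exact Or.inl ⟨rfl, hmu⟩
        linarith
    · -- M'.m u = v ≠ u
      set v := M'.m u with hv
      have hvu : M'.m v = u := by rw [hv, M'.invol]
      have hadj : G.adj u v := M'.adj_of_ne u hne
      have hcost : (G.cost M u v : ℝ) ≤ α u + α v := hw.2.1 u v hadj
      have hPu : G.Prefers M' M u = G.Better u v (M.m u) := rfl
      have hPu' : G.Prefers M M' u = G.Better u (M.m u) v := rfl
      have hPv : G.Prefers M' M v = G.Better v u (M.m v) := by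
        unfold Prefers; rw [hvu]
      have hPv' : G.Prefers M M' v = G.Better v (M.m v) u := by
        unfold Prefers; rw [hvu]
      have huv : u ≠ v := fun h => hne h.symm
      suffices h : f u + f v ≤ (G.cost M u v : ℝ) by linarith
      by_cases hb : G.Blocks M u v
      · have : G.cost M u v = 2 := by unfold cost; rw [if_neg huv, if_pos hb]
        rw [this]
        push_cast
        have g1 : f u ≤ 1 := by
          simp only [hf]; split <;> split <;> norm_num
        have g2 : f v ≤ 1 := by
          simp only [hf]; split <;> split <;> norm_num
        linarith
      · by_cases hn : G.Negative M u v
        · have : G.cost M u v = -2 := by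
            unfold cost; rw [if_neg huv, if_neg hb, if_pos hn]
          rw [this]
          obtain ⟨-, hn1, hn2⟩ := hn
          have g1 : f u = -1 := by
            simp only [hf, hPu, hPu']
            rw [if_neg (fun h => better_asym G hasym h hn1), if_pos hn1]
            norm_num
          have g2 : f v = -1 := by
            simp only [hf, hPv, hPv']
            rw [if_neg (fun h => better_asym G hasym h hn2), if_pos hn2]
            norm_num
          rw [g1, g2]; norm_num
        · have : G.cost M u v = 0 := by
            unfold cost; rw [if_neg huv, if_neg hb, if_neg hn]
          rw [this]
          push_cast
          -- show f u + f v ≤ 0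
          have hnb : ¬ (G.Better u v (M.m u) ∧ G.Better v u (M.m v)) := by
            intro ⟨h1, h2⟩; exact hb ⟨hadj, h1, h2⟩
          by_cases h1 : G.Better u v (M.m u)
          · have h2 : ¬ G.Better v u (M.m v) := fun h2 => hnb ⟨h1, h2⟩
            -- then f v ≤ 0; and if f v = 0 contradiction via totality
            have hmvu : M.m v ≠ u := by
              intro h
              have hmu : M.m u = v := by rw [← h, M.invol]
              rw [hmu] at h1
              rcases h1 with ⟨h', hne'⟩ | ⟨hne', h', hp⟩
              · exact hne' h'
              · exact hasym u v v hp hp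
            have h3 : G.Better v (M.m v) u :=
              better_total G htot M (G.adj_symm u v hadj) hmvu h2
            have g1 : f u ≤ 1 := by simp only [hf]; split <;> split <;> norm_num
            have g2 : f v = -1 := by
              simp only [hf, hPv, hPv']
              rw [if_neg h2, if_pos h3]; norm_num
            linarith
          · have g1 : f u ≤ 0 := by
              simp only [hf, hPu, hPu', if_neg h1]
              split <;> norm_num
            by_cases h2 : G.Better v u (M.m v)
            · have hmuv : M.m u ≠ v := by
                intro h
                have hmv : M.m v = u := by rw [← h, M.invol]
                rw [hmv] at h2
                rcases h2 with ⟨h', hne'⟩ | ⟨hne', h', hp⟩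
                · exact hne' h'
                · exact hasym v u u hp hp
              have h3 : G.Better u (M.m u) v := better_total G htot M hadj hmuv h1
              have g2 : f v ≤ 1 := by simp only [hf]; split <;> split <;> norm_num
              have g1' : f u = -1 := by
                simp only [hf, hPu, hPu', if_neg h1, if_pos h3]; norm_num
              linarith
            · have g2 : f v ≤ 0 := by
                simp only [hf, hPv, hPv', if_neg h2]
                split <;> norm_num
              linarith
  -- sum up
  have hsum2 : ∑ u, f (M'.m u) = ∑ u, f u :=
    Fintype.sum_equiv ⟨M'.m, M'.m, M'.invol, M'.invol⟩ _ _ (fun u => rfl)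
  have hsumα : ∑ u, α (M'.m u) = ∑ u, α u :=
    Fintype.sum_equiv ⟨M'.m, M'.m, M'.invol, M'.invol⟩ _ _ (fun u => rfl)
  have htotal : ∑ u, (f u + f (M'.m u)) ≤ ∑ u, (α u + α (M'.m u)) :=
    Finset.sum_le_sum (fun u _ => key u)
  rw [Finset.sum_add_distrib, Finset.sum_add_distrib, hsum2, hsumα, hw.1] at htotal
  have hff : ∑ u, f u ≤ 0 := by linarith
  rw [hsumf] at hff
  unfold delta
  have : (G.phi M' M : ℝ) ≤ (G.phi M M' : ℝ) := by linarith
  have h2 : (G.phi M' M : ℤ) ≤ (G.phi M M' : ℤ) := by exact_mod_cast this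
  omega

end RoommatesInstance

namespace RoommatesInstance
variable {V : Type} (G : RoommatesInstance V)

lemma better_self_false (hasym : ∀ u v w, G.pref u v w → G.pref u w v → False)
    {u v : V} : ¬ G.Better u v v := by
  rintro (⟨h1, h2⟩ | ⟨h1, h2, h3⟩)
  · exact h2 h1
  · exact hasym u v v h3 h3

lemma better_left_self_false {u w : V} : ¬ G.Better u u w := by
  rintro (⟨-, h⟩ | ⟨h, -, -⟩) <;> exact h rfl

lemma cost_matched (hasym : ∀ u v w, G.pref u v w → G.pref u w v → False)
    {M : G.Matching} {u v : V} (h : M.m u = v) (huv : u ≠ v) : G.cost M u v = 0 := by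
  unfold cost
  rw [if_neg huv]
  have hb : ¬ G.Blocks M u v := by
    rintro ⟨-, h1, -⟩; rw [h] at h1; exact better_self_false G hasym h1
  have hn : ¬ G.Negative M u v := by
    rintro ⟨-, h1, -⟩; rw [h] at h1; exact better_self_false G hasym h1
  rw [if_neg hb, if_neg hn]

lemma cost_le_two {M : G.Matching} {u v : V} : G.cost M u v ≤ 2 := by
  unfold cost; split_ifs <;> norm_num

lemma cost_le_zero {M : G.Matching} {u v : V} (hne : u ≠ v) (h : ¬ G.Blocks M u v) :
    G.cost M u v ≤ 0 := by
  unfold cost; rw [if_neg hne, if_neg h]; split_ifs <;> norm_num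

lemma cost_eq_neg2 (hasym : ∀ u v w, G.pref u v w → G.pref u w v → False)
    {M : G.Matching} {u v : V} (hne : u ≠ v) (hn : G.Negative M u v) :
    G.cost M u v = -2 := by
  have hb : ¬ G.Blocks M u v := by
    rintro ⟨-, h1, -⟩
    exact better_asym G hasym h1 hn.2.1
  unfold cost; rw [if_neg hne, if_neg hb, if_pos hn]

lemma cost_blocks {M : G.Matching} {u v : V} (hne : u ≠ v) (h : G.Blocks M u v) :
    G.cost M u v = 2 := by
  unfold cost; rw [if_neg hne, if_pos h]

lemma cost_nonneg {M : G.Matching} {u v : V} (hne : u ≠ v) (h : ¬ G.Negative M u v) :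
    0 ≤ G.cost M u v := by
  unfold cost; rw [if_neg hne, if_neg h]
  split_ifs <;> norm_num

lemma cost_congr {M M' : G.Matching} {u v : V} (hu : M.m u = M'.m u) (hv : M.m v = M'.m v) :
    G.cost M u v = G.cost M' u v := by
  unfold cost Blocks Negative
  rw [hu, hv]

end RoommatesInstance

namespace VCW
open RoommatesInstance

variable {n : ℕ} {H : SimpleGraph (Fin n)}

lemma adj_ne {x y : BV n} (h : (BGofH H).adj x y) : x ≠ y := h.1

-- ### neighbor characterizations

lemma nbr_a0 {x : BV n} (h : (BGofH H).adj BV.a0 x) : ∃ k, x = BV.b k := by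
  obtain ⟨hne, h | h⟩ := h <;> simp only [brel, reduceCtorEq, false_and, and_false,
    exists_false, or_false, false_or, or_self, exists_and_left, exists_eq_left'] at h <;> aesop

lemma nbr_b0 {x : BV n} (h : (BGofH H).adj BV.b0 x) : ∃ k, x = BV.a k := by
  obtain ⟨hne, h | h⟩ := h <;> simp only [brel, reduceCtorEq, false_and, and_false,
    exists_false, or_false, false_or, or_self, exists_and_left, exists_eq_left'] at h <;> aesop

lemma nbr_a {i : Fin n} {x : BV n} (h : (BGofH H).adj (BV.a i) x) :
    x = BV.b i ∨ x = BV.b' i ∨ x = BV.b0 ∨ ∃ k, x = BV.t i k ∧ H.Adj i k ∧ i < k := by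
  obtain ⟨hne, h | h⟩ := h <;> simp only [brel, reduceCtorEq, BV.a.injEq, false_and, and_false,
    exists_false, or_false, false_or, or_self, exists_and_left, exists_eq_left'] at h <;> aesop

lemma nbr_b {i : Fin n} {x : BV n} (h : (BGofH H).adj (BV.b i) x) :
    x = BV.a i ∨ x = BV.a' i ∨ x = BV.a0 ∨ ∃ k, x = BV.s k i ∧ H.Adj k i ∧ k < i := by
  obtain ⟨hne, h | h⟩ := h <;> simp only [brel, reduceCtorEq, BV.b.injEq, false_and, and_false,
    exists_false, or_false, false_or, or_self, exists_and_left, exists_eq_left'] at h <;> aesop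

lemma nbr_a' {i : Fin n} {x : BV n} (h : (BGofH H).adj (BV.a' i) x) :
    x = BV.b i ∨ x = BV.b' i := by
  obtain ⟨hne, h | h⟩ := h <;> simp only [brel, reduceCtorEq, BV.a'.injEq, false_and, and_false,
    exists_false, or_false, false_or, or_self, exists_and_left, exists_eq_left'] at h <;> aesop

lemma nbr_b' {i : Fin n} {x : BV n} (h : (BGofH H).adj (BV.b' i) x) :
    x = BV.a i ∨ x = BV.a' i := by
  obtain ⟨hne, h | h⟩ := h <;> simp only [brel, reduceCtorEq, BV.b'.injEq, false_and, and_false,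
    exists_false, or_false, false_or, or_self, exists_and_left, exists_eq_left'] at h <;> aesop

lemma nbr_s {i j : Fin n} {x : BV n} (h : (BGofH H).adj (BV.s i j) x) :
    (x = BV.t' i j ∨ x = BV.t'' i j ∨ x = BV.b j) ∧ H.Adj i j ∧ i < j := by
  obtain ⟨hne, h | h⟩ := h <;> simp only [brel, reduceCtorEq, BV.s.injEq, false_and, and_false,
    exists_false, or_false, false_or, or_self, exists_and_left, exists_eq_left'] at h <;> aesop

lemma nbr_t {i j : Fin n} {x : BV n} (h : (BGofH H).adj (BV.t i j) x) :
    (x = BV.s' i j ∨ x = BV.s'' i j ∨ x = BV.a i) ∧ H.Adj i j ∧ i < j := by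
  obtain ⟨hne, h | h⟩ := h <;> simp only [brel, reduceCtorEq, BV.t.injEq, false_and, and_false,
    exists_false, or_false, false_or, or_self, exists_and_left, exists_eq_left'] at h <;> aesop

lemma nbr_s' {i j : Fin n} {x : BV n} (h : (BGofH H).adj (BV.s' i j) x) :
    (x = BV.t' i j ∨ x = BV.t i j) ∧ H.Adj i j ∧ i < j := by
  obtain ⟨hne, h | h⟩ := h <;> simp only [brel, reduceCtorEq, BV.s'.injEq, false_and, and_false,
    exists_false, or_false, false_or, or_self, exists_and_left, exists_eq_left'] at h <;> aesop

lemma nbr_s'' {i j : Fin n} {x : BV n} (h : (BGofH H).adj (BV.s'' i j) x) :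
    (x = BV.t'' i j ∨ x = BV.t i j) ∧ H.Adj i j ∧ i < j := by
  obtain ⟨hne, h | h⟩ := h <;> simp only [brel, reduceCtorEq, BV.s''.injEq, false_and, and_false,
    exists_false, or_false, false_or, or_self, exists_and_left, exists_eq_left'] at h <;> aesop

lemma nbr_t' {i j : Fin n} {x : BV n} (h : (BGofH H).adj (BV.t' i j) x) :
    (x = BV.s i j ∨ x = BV.s' i j) ∧ H.Adj i j ∧ i < j := by
  obtain ⟨hne, h | h⟩ := h <;> simp only [brel, reduceCtorEq, BV.t'.injEq, false_and, and_false,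
    exists_false, or_false, false_or, or_self, exists_and_left, exists_eq_left'] at h <;> aesop

lemma nbr_t'' {i j : Fin n} {x : BV n} (h : (BGofH H).adj (BV.t'' i j) x) :
    (x = BV.s i j ∨ x = BV.s'' i j) ∧ H.Adj i j ∧ i < j := by
  obtain ⟨hne, h | h⟩ := h <;> simp only [brel, reduceCtorEq, BV.t''.injEq, false_and, and_false,
    exists_false, or_false, false_or, or_self, exists_and_left, exists_eq_left'] at h <;> aesop

end VCW

namespace VCW
open RoommatesInstance

variable {n : ℕ} {H : SimpleGraph (Fin n)}

-- ### adjacency intro lemmas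
lemma adj_a0_b (i : Fin n) : (BGofH H).adj BV.a0 (BV.b i) :=
  ⟨by simp, Or.inl (Or.inl ⟨i, rfl, rfl⟩)⟩
lemma adj_b0_a (i : Fin n) : (BGofH H).adj BV.b0 (BV.a i) :=
  ⟨by simp, Or.inl (Or.inr (Or.inl ⟨i, rfl, rfl⟩))⟩
lemma adj_a_b (i : Fin n) : (BGofH H).adj (BV.a i) (BV.b i) :=
  ⟨by simp, Or.inl (Or.inr (Or.inr (Or.inl ⟨i, rfl, Or.inl rfl⟩)))⟩
lemma adj_a_b' (i : Fin n) : (BGofH H).adj (BV.a i) (BV.b' i) :=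
  ⟨by simp, Or.inl (Or.inr (Or.inr (Or.inl ⟨i, rfl, Or.inr rfl⟩)))⟩
lemma adj_a'_b (i : Fin n) : (BGofH H).adj (BV.a' i) (BV.b i) :=
  ⟨by simp, Or.inl (Or.inr (Or.inr (Or.inr (Or.inl ⟨i, rfl, Or.inl rfl⟩))))⟩
lemma adj_a'_b' (i : Fin n) : (BGofH H).adj (BV.a' i) (BV.b' i) :=
  ⟨by simp, Or.inl (Or.inr (Or.inr (Or.inr (Or.inl ⟨i, rfl, Or.inr rfl⟩))))⟩

variable {i j : Fin n} (hij : H.Adj i j) (hlt : i < j)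
include hij hlt

lemma adj_a_t : (BGofH H).adj (BV.a i) (BV.t i j) :=
  ⟨by simp, Or.inl (Or.inr (Or.inr (Or.inr (Or.inr (Or.inl ⟨i, j, rfl, rfl, hij, hlt⟩)))))⟩
lemma adj_b_s : (BGofH H).adj (BV.b j) (BV.s i j) :=
  ⟨by simp, Or.inl (Or.inr (Or.inr (Or.inr (Or.inr (Or.inr (Or.inl ⟨i, j, rfl, rfl, hij, hlt⟩))))))⟩
lemma adj_s_t' : (BGofH H).adj (BV.s i j) (BV.t' i j) :=
  ⟨by simp, Or.inl (Or.inr (Or.inr (Or.inr (Or.inr (Or.inr (Or.inr (Or.inl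
    ⟨i, j, rfl, Or.inl rfl, hij, hlt⟩)))))))⟩
lemma adj_s_t'' : (BGofH H).adj (BV.s i j) (BV.t'' i j) :=
  ⟨by simp, Or.inl (Or.inr (Or.inr (Or.inr (Or.inr (Or.inr (Or.inr (Or.inl
    ⟨i, j, rfl, Or.inr rfl, hij, hlt⟩)))))))⟩
lemma adj_s'_t' : (BGofH H).adj (BV.s' i j) (BV.t' i j) :=
  ⟨by simp, Or.inl (Or.inr (Or.inr (Or.inr (Or.inr (Or.inr (Or.inr (Or.inr (Or.inl
    ⟨i, j, rfl, Or.inl rfl, hij, hlt⟩))))))))⟩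
lemma adj_s'_t : (BGofH H).adj (BV.s' i j) (BV.t i j) :=
  ⟨by simp, Or.inl (Or.inr (Or.inr (Or.inr (Or.inr (Or.inr (Or.inr (Or.inr (Or.inl
    ⟨i, j, rfl, Or.inr rfl, hij, hlt⟩))))))))⟩
lemma adj_s''_t'' : (BGofH H).adj (BV.s'' i j) (BV.t'' i j) :=
  ⟨by simp, Or.inl (Or.inr (Or.inr (Or.inr (Or.inr (Or.inr (Or.inr (Or.inr (Or.inr
    ⟨i, j, rfl, Or.inl rfl, hij, hlt⟩))))))))⟩
lemma adj_s''_t : (BGofH H).adj (BV.s'' i j) (BV.t i j) :=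
  ⟨by simp, Or.inl (Or.inr (Or.inr (Or.inr (Or.inr (Or.inr (Or.inr (Or.inr (Or.inr
    ⟨i, j, rfl, Or.inr rfl, hij, hlt⟩))))))))⟩

omit hij hlt

-- ### strict preference facts
set_option maxHeartbeats 2000000 in
lemma brank_inj {u v w : BV n} (hv : (BGofH H).adj u v) (hw : (BGofH H).adj u w)
    (h : brank u v = brank u w) : v = w := by
  cases u with
  | a0 =>
      obtain ⟨k, rfl⟩ := nbr_a0 hv; obtain ⟨l, rfl⟩ := nbr_a0 hw
      simp only [brank] at h
      exact congrArg _ (Fin.val_injective h)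
  | b0 =>
      obtain ⟨k, rfl⟩ := nbr_b0 hv; obtain ⟨l, rfl⟩ := nbr_b0 hw
      simp only [brank] at h
      exact congrArg _ (Fin.val_injective h)
  | a i =>
      rcases nbr_a hv with rfl | rfl | rfl | ⟨k, rfl, -⟩ <;>
        rcases nbr_a hw with rfl | rfl | rfl | ⟨l, rfl, -⟩ <;>
        simp only [brank] at h <;>
        first
          | rfl
          | (exfalso; omega)
          | exact congrArg (fun m => BV.t i m) (Fin.val_injective (by omega))
  | b i =>
      rcases nbr_b hv with rfl | rfl | rfl | ⟨k, rfl, -⟩ <;>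
        rcases nbr_b hw with rfl | rfl | rfl | ⟨l, rfl, -⟩ <;>
        simp only [brank] at h <;>
        first
          | rfl
          | (exfalso; omega)
          | exact congrArg (fun m => BV.s m i) (Fin.val_injective (by omega))
  | a' i =>
      rcases nbr_a' hv with rfl | rfl <;> rcases nbr_a' hw with rfl | rfl <;>
        simp only [brank] at h <;> first | rfl | (exfalso; omega)
  | b' i =>
      rcases nbr_b' hv with rfl | rfl <;> rcases nbr_b' hw with rfl | rfl <;>
        simp only [brank] at h <;> first | rfl | (exfalso; omega)
  | s i j =>
      rcases (nbr_s hv).1 with rfl | rfl | rfl <;> rcases (nbr_s hw).1 with rfl | rfl | rfl <;>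
        simp only [brank] at h <;> first | rfl | (exfalso; omega)
  | t i j =>
      rcases (nbr_t hv).1 with rfl | rfl | rfl <;> rcases (nbr_t hw).1 with rfl | rfl | rfl <;>
        simp only [brank] at h <;> first | rfl | (exfalso; omega)
  | s' i j =>
      rcases (nbr_s' hv).1 with rfl | rfl <;> rcases (nbr_s' hw).1 with rfl | rfl <;>
        simp only [brank] at h <;> first | rfl | (exfalso; omega)
  | s'' i j =>
      rcases (nbr_s'' hv).1 with rfl | rfl <;> rcases (nbr_s'' hw).1 with rfl | rfl <;>
        simp only [brank] at h <;> first | rfl | (exfalso; omega)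
  | t' i j =>
      rcases (nbr_t' hv).1 with rfl | rfl <;> rcases (nbr_t' hw).1 with rfl | rfl <;>
        simp only [brank] at h <;> first | rfl | (exfalso; omega)
  | t'' i j =>
      rcases (nbr_t'' hv).1 with rfl | rfl <;> rcases (nbr_t'' hw).1 with rfl | rfl <;>
        simp only [brank] at h <;> first | rfl | (exfalso; omega)

lemma inst_asym : ∀ u v w : BV n, (BGofH H).pref u v w → (BGofH H).pref u w v → False :=
  fun _ _ _ h1 h2 => by
    have g1 := h1.2.2
    have g2 := h2.2.2
    omega

lemma inst_tot : ∀ u v w : BV n, (BGofH H).adj u v → (BGofH H).adj u w → v ≠ w →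
    (BGofH H).pref u v w ∨ (BGofH H).pref u w v := by
  intro u v w hv hw hne
  have hr : brank u v ≠ brank u w := fun h => hne (brank_inj hv hw h)
  rcases Nat.lt_or_ge (brank u v) (brank u w) with h | h
  · exact Or.inl ⟨hv, hw, h⟩
  · exact Or.inr ⟨hw, hv, by omega⟩

lemma popularize [Fintype (BV n)] {M : (BGofH H).Matching} {α : BV n → ℝ}
    (hw : (BGofH H).IsWitness M α) : (BGofH H).Popular M :=
  popular_of_witness _ inst_asym inst_tot M α hw

-- ### Better helpers
lemma better_rank {u v w : BV n} (hv : (BGofH H).adj u v) (hw : (BGofH H).adj u w)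
    (h : brank u v < brank u w) : (BGofH H).Better u v w :=
  Or.inr ⟨(adj_ne hv).symm, (adj_ne hw).symm, hv, hw, h⟩

lemma better_unm {u v : BV n} (hvu : v ≠ u) : (BGofH H).Better u v u := Or.inl ⟨rfl, hvu⟩

lemma not_better_rank {u v w : BV n} (hwu : w ≠ u) (h : ¬ brank u v < brank u w) :
    ¬ (BGofH H).Better u v w := by
  rintro (⟨h1, -⟩ | ⟨-, -, hp⟩)
  · exact hwu h1
  · exact h hp.2.2

lemma better_elim {u v w : BV n} (h : (BGofH H).Better u v w) (hwu : w ≠ u) :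
    (BGofH H).adj u v ∧ brank u v < brank u w := by
  rcases h with ⟨h1, -⟩ | ⟨-, -, hp⟩
  · exact absurd h1 hwu
  · exact ⟨hp.1, hp.2.2⟩

end VCW

namespace VCW
open RoommatesInstance

variable {n : ℕ} {H : SimpleGraph (Fin n)}

lemma adjs {x y : BV n} (h : (BGofH H).adj x y) : (BGofH H).adj y x :=
  (BGofH H).adj_symm x y h

section Witness

variable {N : (BGofH H).Matching} {α : BV n → ℝ}

lemma minv {u v : BV n} (h : N.m u = v) : N.m v = u := by rw [← h, N.invol]

lemma le1 (h01 : ∀ u, α u = 0 ∨ α u = 1 ∨ α u = -1) (u : BV n) : α u ≤ 1 := by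
  rcases h01 u with h | h | h <;> rw [h] <;> norm_num

lemma ge1 (h01 : ∀ u, α u = 0 ∨ α u = 1 ∨ α u = -1) (u : BV n) : -1 ≤ α u := by
  rcases h01 u with h | h | h <;> rw [h] <;> norm_num

variable (hα : (BGofH H).IsWitness N α)
include hα

lemma stepA : ∀ u, α u + α (N.m u) = 0 := by
  have h0 : ∀ u : BV n, 0 ≤ α u + α (N.m u) := by
    intro u
    by_cases h : N.m u = u
    · have h2 := hα.2.2 u
      have h3 : (BGofH H).cost N u u = 0 := by
        unfold RoommatesInstance.cost; rw [if_pos rfl, if_pos h]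
      rw [h3] at h2
      rw [h]
      push_cast at h2
      linarith
    · have hadj := N.adj_of_ne u h
      have h2 := hα.2.1 u (N.m u) hadj
      have h3 : (BGofH H).cost N u (N.m u) = 0 :=
        cost_matched _ inst_asym rfl (Ne.symm h)
      rw [h3] at h2
      push_cast at h2
      linarith
  have hsum : ∑ u : BV n, (α u + α (N.m u)) = 0 := by
    rw [Finset.sum_add_distrib]
    have he : ∑ u, α (N.m u) = ∑ u, α u :=
      Fintype.sum_equiv ⟨N.m, N.m, N.invol, N.invol⟩ _ _ (fun u => rfl)
    rw [he, hα.1]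
    ring
  intro u
  exact (Finset.sum_eq_zero_iff_of_nonneg (fun u _ => h0 u)).1 hsum u (Finset.mem_univ u)

lemma unm0 {u : BV n} (h : N.m u = u) : α u = 0 := by
  have := stepA hα u
  rw [h] at this
  linarith

lemma matched_of_ne0 {u : BV n} (h : α u ≠ 0) : N.m u ≠ u :=
  fun h' => h (unm0 hα h')

lemma pairA {u v : BV n} (h : N.m u = v) : α v = - α u := by
  have := stepA hα u
  rw [h] at this
  linarith

variable (h01 : ∀ u, α u = 0 ∨ α u = 1 ∨ α u = -1)
include h01

lemma blocks11 {u v : BV n} (h : (BGofH H).Blocks N u v) : α u = 1 ∧ α v = 1 := by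
  have h2 := hα.2.1 u v h.1
  rw [cost_blocks _ (adj_ne h.1) h] at h2
  push_cast at h2
  constructor
  · have g1 := le1 h01 v; have g2 := le1 h01 u; linarith
  · have g1 := le1 h01 v; have g2 := le1 h01 u; linarith

omit h01

lemma edge_ge0 {u v : BV n} (hadj : (BGofH H).adj u v) (hn : ¬ (BGofH H).Negative N u v) :
    0 ≤ α u + α v := by
  have h2 := hα.2.1 u v hadj
  have h3 := cost_nonneg (BGofH H) (adj_ne hadj) hn
  have h4 : ((0:ℤ):ℝ) ≤ ((BGofH H).cost N u v : ℝ) := by exact_mod_cast h3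
  push_cast at h4
  linarith

end Witness

section Cfix

variable {N : (BGofH H).Matching} {α : BV n → ℝ}
variable (hα : (BGofH H).IsWitness N α) (h01 : ∀ u, α u = 0 ∨ α u = 1 ∨ α u = -1)
include hα h01

/-- If `α (a i) = 1` then all of `C_i` has `α` values in `{±1}`. -/
lemma Cfix_a {i : Fin n} (ha : α (BV.a i) = 1) :
    (α (BV.a i) = 1 ∨ α (BV.a i) = -1) ∧ (α (BV.a' i) = 1 ∨ α (BV.a' i) = -1) ∧
      (α (BV.b i) = 1 ∨ α (BV.b i) = -1) ∧ (α (BV.b' i) = 1 ∨ α (BV.b' i) = -1) := by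
  have hma : N.m (BV.a i) ≠ BV.a i := matched_of_ne0 hα (by rw [ha]; norm_num)
  have key : ∀ w : BV n, N.m (BV.a i) = w →
      brank (BV.a i) (BV.b i) < brank (BV.a i) w →
      brank (BV.a i) (BV.b' i) < brank (BV.a i) w →
      (α (BV.a i) = 1 ∨ α (BV.a i) = -1) ∧ (α (BV.a' i) = 1 ∨ α (BV.a' i) = -1) ∧
      (α (BV.b i) = 1 ∨ α (BV.b i) = -1) ∧ (α (BV.b' i) = 1 ∨ α (BV.b' i) = -1) := by
    intro w hab hr0 hr1
    have hadjw : (BGofH H).adj (BV.a i) w := by rw [← hab]; exact N.adj_of_ne _ hma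
    have hbnota : N.m (BV.b i) ≠ BV.a i := by
      intro h
      have h2 := (minv h).symm.trans hab
      rw [← h2] at hr0
      omega
    -- b i prefers a i to its partner
    have hbet_b : (BGofH H).Better (BV.b i) (BV.a i) (N.m (BV.b i)) := by
      by_cases h : N.m (BV.b i) = BV.b i
      · rw [h]; exact better_unm (by simp)
      · rcases nbr_b (N.adj_of_ne _ h) with h' | h' | h' | ⟨k, h', -, -⟩ <;> rw [h'] <;>
          [exact absurd h' hbnota;
           exact better_rank (adjs (adj_a_b i)) (adjs (adj_a'_b i)) (by norm_num [brank]);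
           exact better_rank (adjs (adj_a_b i)) (adjs (adj_a0_b i)) (by norm_num [brank]);
           skip]
        have hadjk : (BGofH H).adj (BV.b i) (BV.s k i) := by rw [← h']; exact N.adj_of_ne _ h
        exact better_rank (adjs (adj_a_b i)) hadjk (by norm_num [brank])
    have hbl := blocks11 hα h01 (u := BV.a i) (v := BV.b i)
      ⟨adj_a_b i, by rw [hab]; exact better_rank (adj_a_b i) hadjw hr0, hbet_b⟩
    have hb1 : α (BV.b i) = 1 := hbl.2
    by_cases hb' : N.m (BV.b' i) = BV.b' i
    · exfalso
      have hbl2 := blocks11 hα h01 (u := BV.a i) (v := BV.b' i)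
        ⟨adj_a_b' i, by rw [hab]; exact better_rank (adj_a_b' i) hadjw hr1,
          by rw [hb']; exact better_unm (by simp)⟩
      have h0 := unm0 hα hb'
      linarith [hbl2.2]
    · have hmb' : N.m (BV.b' i) = BV.a' i := by
        rcases nbr_b' (N.adj_of_ne _ hb') with h' | h'
        · exfalso
          have := (minv h').symm.trans hab
          rw [← this] at hr1
          omega
        · exact h'
      have hbl2 := blocks11 hα h01 (u := BV.a i) (v := BV.b' i)
        ⟨adj_a_b' i, by rw [hab]; exact better_rank (adj_a_b' i) hadjw hr1,
          by rw [hmb']; exact better_rank (adjs (adj_a_b' i)) (adjs (adj_a'_b' i)) (by norm_num [brank])⟩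
      have ha' : α (BV.a' i) = -1 := by rw [pairA hα hmb', hbl2.2]
      exact ⟨Or.inl ha, Or.inr ha', Or.inl hb1, Or.inl hbl2.2⟩
  rcases nbr_a (N.adj_of_ne _ hma) with hab | hab | hab | ⟨k, hab, hk, hik⟩
  · -- m (a i) = b i
    have hb : α (BV.b i) = -1 := by rw [pairA hα hab, ha]
    have hmb : N.m (BV.b i) = BV.a i := minv hab
    by_cases hb' : N.m (BV.b' i) = BV.b' i
    · exfalso
      have hb'0 : α (BV.b' i) = 0 := unm0 hα hb'
      have ha' : N.m (BV.a' i) = BV.a' i := by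
        by_contra hma'
        rcases nbr_a' (N.adj_of_ne _ hma') with h' | h'
        · have h2 := (minv h').symm.trans hmb
          exact absurd h2 (by simp)
        · exact absurd ((minv h').symm.trans hb') (by simp)
      have hbl := blocks11 hα h01 (u := BV.a' i) (v := BV.b' i)
        ⟨adj_a'_b' i, by rw [ha']; exact better_unm (by simp),
          by rw [hb']; exact better_unm (by simp)⟩
      have h0 := unm0 hα ha'
      linarith [hbl.1]
    · have hmb' : N.m (BV.b' i) = BV.a' i := by
        rcases nbr_b' (N.adj_of_ne _ hb') with h' | h'
        · exfalso
          have h2 := (minv h').symm.trans hab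
          exact absurd h2 (by simp)
        · exact h'
      have hpa' : α (BV.a' i) = - α (BV.b' i) := pairA hα hmb'
      have hge : 0 ≤ α (BV.a' i) + α (BV.b i) := by
        refine edge_ge0 hα (adj_a'_b i) ?_
        rintro ⟨-, h1, -⟩
        rw [minv hmb'] at h1
        exact (not_better_rank (by simp) (by norm_num [brank])) h1
      have ha'1 : α (BV.a' i) = 1 := by
        have := le1 h01 (BV.a' i); linarith
      refine ⟨Or.inl ha, Or.inl ha'1, Or.inr hb, Or.inr ?_⟩
      rw [hpa'] at ha'1; linarith
  · -- m (a i) = b' i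
    have hb' : α (BV.b' i) = -1 := by rw [pairA hα hab, ha]
    have hmb' : N.m (BV.b' i) = BV.a i := minv hab
    have hma' : N.m (BV.a' i) = BV.b i := by
      by_cases h' : N.m (BV.a' i) = BV.a' i
      · exfalso
        have hge : 0 ≤ α (BV.a' i) + α (BV.b' i) := by
          refine edge_ge0 hα (adj_a'_b' i) ?_
          rintro ⟨-, h1, -⟩
          rw [h'] at h1
          exact better_left_self_false _ h1
        have h0 := unm0 hα h'
        linarith
      · rcases nbr_a' (N.adj_of_ne _ h') with h'' | h''
        · exact h''
        · exfalso
          exact absurd ((minv h'').symm.trans hmb') (by simp)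
    have hbl := blocks11 hα h01 (u := BV.a i) (v := BV.b i)
      ⟨adj_a_b i, by rw [hab]; exact better_rank (adj_a_b i) (adj_a_b' i) (by norm_num [brank]),
        by rw [minv hma']; exact better_rank (adjs (adj_a_b i)) (adjs (adj_a'_b i)) (by norm_num [brank])⟩
    have ha'v : α (BV.a' i) = -1 := by
      have h9 := pairA hα (minv hma'); rw [hbl.2] at h9; linarith
    exact ⟨Or.inl ha, Or.inr ha'v, Or.inl hbl.2, Or.inr hb'⟩
  · exact key _ hab (by simp only [brank]; omega) (by simp only [brank]; omega)
  · exact key _ hab (by simp only [brank]; omega) (by simp only [brank]; omega)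

/-- Mirror: if `α (b j) = 1` then all of `C_j` has `α` values in `{±1}`. -/
lemma Cfix_b {j : Fin n} (hb : α (BV.b j) = 1) :
    (α (BV.a j) = 1 ∨ α (BV.a j) = -1) ∧ (α (BV.a' j) = 1 ∨ α (BV.a' j) = -1) ∧
      (α (BV.b j) = 1 ∨ α (BV.b j) = -1) ∧ (α (BV.b' j) = 1 ∨ α (BV.b' j) = -1) := by
  have hmb : N.m (BV.b j) ≠ BV.b j := matched_of_ne0 hα (by rw [hb]; norm_num)
  have key : ∀ w : BV n, N.m (BV.b j) = w →
      brank (BV.b j) (BV.a j) < brank (BV.b j) w →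
      brank (BV.b j) (BV.a' j) < brank (BV.b j) w →
      (α (BV.a j) = 1 ∨ α (BV.a j) = -1) ∧ (α (BV.a' j) = 1 ∨ α (BV.a' j) = -1) ∧
      (α (BV.b j) = 1 ∨ α (BV.b j) = -1) ∧ (α (BV.b' j) = 1 ∨ α (BV.b' j) = -1) := by
    intro w hba hr0 hr1
    have hadjw : (BGofH H).adj (BV.b j) w := by rw [← hba]; exact N.adj_of_ne _ hmb
    have hanotb : N.m (BV.a j) ≠ BV.b j := by
      intro h
      have h2 := (minv h).symm.trans hba
      rw [← h2] at hr0
      omega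
    have hbet_a : (BGofH H).Better (BV.a j) (BV.b j) (N.m (BV.a j)) := by
      by_cases h : N.m (BV.a j) = BV.a j
      · rw [h]; exact better_unm (by simp)
      · rcases nbr_a (N.adj_of_ne _ h) with h' | h' | h' | ⟨k, h', -, -⟩ <;> rw [h'] <;>
          [exact absurd h' hanotb;
           exact better_rank (adj_a_b j) (adj_a_b' j) (by norm_num [brank]);
           exact better_rank (adj_a_b j) (by rw [← h']; exact N.adj_of_ne _ h) (by norm_num [brank]);
           skip]
        have hadjk : (BGofH H).adj (BV.a j) (BV.t j k) := by rw [← h']; exact N.adj_of_ne _ h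
        exact better_rank (adj_a_b j) hadjk (by norm_num [brank])
    have hbl := blocks11 hα h01 (u := BV.b j) (v := BV.a j)
      ⟨adjs (adj_a_b j), by rw [hba]; exact better_rank (adjs (adj_a_b j)) hadjw hr0, hbet_a⟩
    have ha1 : α (BV.a j) = 1 := hbl.2
    by_cases ha' : N.m (BV.a' j) = BV.a' j
    · exfalso
      have hbl2 := blocks11 hα h01 (u := BV.b j) (v := BV.a' j)
        ⟨adjs (adj_a'_b j), by rw [hba]; exact better_rank (adjs (adj_a'_b j)) hadjw hr1,
          by rw [ha']; exact better_unm (by simp)⟩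
      have h0 := unm0 hα ha'
      linarith [hbl2.2]
    · have hma' : N.m (BV.a' j) = BV.b' j := by
        rcases nbr_a' (N.adj_of_ne _ ha') with h' | h'
        · exfalso
          have := (minv h').symm.trans hba
          rw [← this] at hr1
          omega
        · exact h'
      have hbl2 := blocks11 hα h01 (u := BV.b j) (v := BV.a' j)
        ⟨adjs (adj_a'_b j), by rw [hba]; exact better_rank (adjs (adj_a'_b j)) hadjw hr1,
          by rw [hma']; exact better_rank (adj_a'_b j) (adj_a'_b' j) (by norm_num [brank])⟩
      have hb'v : α (BV.b' j) = -1 := by rw [pairA hα hma', hbl2.2]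
      exact ⟨Or.inl ha1, Or.inl hbl2.2, Or.inl hb, Or.inr hb'v⟩
  rcases nbr_b (N.adj_of_ne _ hmb) with hba | hba | hba | ⟨k, hba, hk, hik⟩
  · -- m (b j) = a j
    have ha : α (BV.a j) = -1 := by rw [pairA hα hba, hb]
    have hma : N.m (BV.a j) = BV.b j := minv hba
    by_cases ha' : N.m (BV.a' j) = BV.a' j
    · exfalso
      have ha'0 : α (BV.a' j) = 0 := unm0 hα ha'
      have hb' : N.m (BV.b' j) = BV.b' j := by
        by_contra hmb'
        rcases nbr_b' (N.adj_of_ne _ hmb') with h' | h'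
        · have h2 := (minv h').symm.trans hma
          exact absurd h2 (by simp)
        · exact absurd ((minv h').symm.trans ha') (by simp)
      have hbl := blocks11 hα h01 (u := BV.a' j) (v := BV.b' j)
        ⟨adj_a'_b' j, by rw [ha']; exact better_unm (by simp),
          by rw [hb']; exact better_unm (by simp)⟩
      linarith [hbl.1]
    · have hma' : N.m (BV.a' j) = BV.b' j := by
        rcases nbr_a' (N.adj_of_ne _ ha') with h' | h'
        · exfalso
          have h2 := (minv h').symm.trans hba
          exact absurd h2 (by simp)
        · exact h'
      have hpb' : α (BV.b' j) = - α (BV.a' j) := pairA hα hma'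
      have hge : 0 ≤ α (BV.b' j) + α (BV.a j) := by
        refine edge_ge0 hα (adjs (adj_a_b' j)) ?_
        rintro ⟨-, h1, -⟩
        rw [minv hma'] at h1
        exact (not_better_rank (by simp) (by norm_num [brank])) h1
      have hb'1 : α (BV.b' j) = 1 := by
        have := le1 h01 (BV.b' j); linarith
      refine ⟨Or.inr ha, Or.inr ?_, Or.inl hb, Or.inl hb'1⟩
      rw [hpb'] at hb'1; linarith
  · -- m (b j) = a' j
    have ha' : α (BV.a' j) = -1 := by rw [pairA hα hba, hb]
    have hma' : N.m (BV.a' j) = BV.b j := minv hba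
    have hmb' : N.m (BV.b' j) = BV.a j := by
      by_cases h' : N.m (BV.b' j) = BV.b' j
      · exfalso
        have hge : 0 ≤ α (BV.b' j) + α (BV.a' j) := by
          refine edge_ge0 hα (adjs (adj_a'_b' j)) ?_
          rintro ⟨-, h1, -⟩
          rw [h'] at h1
          exact better_left_self_false _ h1
        have h0 := unm0 hα h'
        linarith
      · rcases nbr_b' (N.adj_of_ne _ h') with h'' | h''
        · exact h''
        · exfalso
          exact absurd ((minv h'').symm.trans hma') (by simp)
    have hbl := blocks11 hα h01 (u := BV.b j) (v := BV.a j)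
      ⟨adjs (adj_a_b j), by rw [hba]; exact better_rank (adjs (adj_a_b j)) (adjs (adj_a'_b j)) (by norm_num [brank]),
        by rw [minv hmb']; exact better_rank (adj_a_b j) (adj_a_b' j) (by norm_num [brank])⟩
    have hb'v : α (BV.b' j) = -1 := by
      have h9 := pairA hα (minv hmb'); rw [hbl.2] at h9; linarith
    exact ⟨Or.inl hbl.2, Or.inr ha', Or.inl hb, Or.inr hb'v⟩
  · exact key _ hba (by simp only [brank]; omega) (by simp only [brank]; omega)
  · exact key _ hba (by simp only [brank]; omega) (by simp only [brank]; omega)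

end Cfix

end VCW

namespace VCW
open RoommatesInstance

variable {n : ℕ}

/-- The matching for the config-(iii) swap. -/
def swA (H : SimpleGraph (Fin n)) (N : (BGofH H).Matching) (i j : Fin n) : BV n → BV n :=
  fun u =>
    if u = BV.s i j then BV.t' i j else
    if u = BV.t' i j then BV.s i j else
    if u = BV.s' i j then BV.t i j else
    if u = BV.t i j then BV.s' i j else N.m u

/-- The witness for the config-(iii) swap. -/
noncomputable def wA (α : BV n → ℝ) (i j : Fin n) : BV n → ℝ :=
  fun u =>
    if u = BV.s i j then -1 else
    if u = BV.t i j then -1 else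
    if u = BV.s' i j then 1 else
    if u = BV.t' i j then 1 else
    if u = BV.s'' i j then 1 else
    if u = BV.t'' i j then -1 else α u

variable {H : SimpleGraph (Fin n)} {N : (BGofH H).Matching} {α : BV n → ℝ} {i j : Fin n}

lemma swA_s : swA H N i j (BV.s i j) = BV.t' i j := by simp [swA]
lemma swA_t' : swA H N i j (BV.t' i j) = BV.s i j := by simp [swA]
lemma swA_s' : swA H N i j (BV.s' i j) = BV.t i j := by simp [swA]
lemma swA_t : swA H N i j (BV.t i j) = BV.s' i j := by simp [swA]
lemma swA_other {u : BV n} (h1 : u ≠ BV.s i j) (h2 : u ≠ BV.t' i j) (h3 : u ≠ BV.s' i j)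
    (h4 : u ≠ BV.t i j) : swA H N i j u = N.m u := by simp [swA, h1, h2, h3, h4]

lemma wA_s : wA α i j (BV.s i j) = -1 := by simp [wA]
lemma wA_t : wA α i j (BV.t i j) = -1 := by simp [wA]
lemma wA_s' : wA α i j (BV.s' i j) = 1 := by simp [wA]
lemma wA_t' : wA α i j (BV.t' i j) = 1 := by simp [wA]
lemma wA_s'' : wA α i j (BV.s'' i j) = 1 := by simp [wA]
lemma wA_t'' : wA α i j (BV.t'' i j) = -1 := by simp [wA]
lemma wA_other {u : BV n} (h1 : u ≠ BV.s i j) (h2 : u ≠ BV.t i j) (h3 : u ≠ BV.s' i j)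
    (h4 : u ≠ BV.t' i j) (h5 : u ≠ BV.s'' i j) (h6 : u ≠ BV.t'' i j) :
    wA α i j u = α u := by simp [wA, h1, h2, h3, h4, h5, h6]

-- weights
lemma wgt_s_t' : wgt (BV.s i j) (BV.t' i j) = 2 := by
  unfold wgt; rw [if_pos]; exact Or.inl (Or.inl ⟨i, j, rfl, Or.inl rfl⟩)
lemma wgt_t'_s : wgt (BV.t' i j) (BV.s i j) = 2 := by
  unfold wgt; rw [if_pos]; exact Or.inr (Or.inl ⟨i, j, rfl, Or.inl rfl⟩)
lemma wgt_s_t'' : wgt (BV.s i j) (BV.t'' i j) = 2 := by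
  unfold wgt; rw [if_pos]; exact Or.inl (Or.inl ⟨i, j, rfl, Or.inr rfl⟩)
lemma wgt_t''_s : wgt (BV.t'' i j) (BV.s i j) = 2 := by
  unfold wgt; rw [if_pos]; exact Or.inr (Or.inl ⟨i, j, rfl, Or.inr rfl⟩)
lemma wgt_t_s' : wgt (BV.t i j) (BV.s' i j) = 2 := by
  unfold wgt; rw [if_pos]; exact Or.inl (Or.inr (Or.inl ⟨i, j, rfl, Or.inl rfl⟩))
lemma wgt_s'_t : wgt (BV.s' i j) (BV.t i j) = 2 := by
  unfold wgt; rw [if_pos]; exact Or.inr (Or.inr (Or.inl ⟨i, j, rfl, Or.inl rfl⟩))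
lemma wgt_t_s'' : wgt (BV.t i j) (BV.s'' i j) = 2 := by
  unfold wgt; rw [if_pos]; exact Or.inl (Or.inr (Or.inl ⟨i, j, rfl, Or.inr rfl⟩))
lemma wgt_s''_t : wgt (BV.s'' i j) (BV.t i j) = 2 := by
  unfold wgt; rw [if_pos]; exact Or.inr (Or.inr (Or.inl ⟨i, j, rfl, Or.inr rfl⟩))
lemma wgt_s'_t' : wgt (BV.s' i j) (BV.t' i j) = 1 := by
  unfold wgt; rw [if_neg]; rintro (h | h) <;> simp [wspecial] at h
lemma wgt_t'_s' : wgt (BV.t' i j) (BV.s' i j) = 1 := by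
  unfold wgt; rw [if_neg]; rintro (h | h) <;> simp [wspecial] at h
lemma wgt_s''_t'' : wgt (BV.s'' i j) (BV.t'' i j) = 1 := by
  unfold wgt; rw [if_neg]; rintro (h | h) <;> simp [wspecial] at h
lemma wgt_t''_s'' : wgt (BV.t'' i j) (BV.s'' i j) = 1 := by
  unfold wgt; rw [if_neg]; rintro (h | h) <;> simp [wspecial] at h

/-- `mwt` as a sum over the whole vertex set. -/
lemma mwt_eq (M : (BGofH H).Matching) :
    mwt H M = ∑ u : BV n, (if M.m u ≠ u then wgt u (M.m u) else 0) := by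
  unfold mwt
  rw [Finset.sum_filter]

lemma mwt_split (M : (BGofH H).Matching) (L : Finset (BV n)) :
    mwt H M = (∑ u ∈ Finset.univ \ L, (if M.m u ≠ u then wgt u (M.m u) else 0)) +
      ∑ u ∈ L, (if M.m u ≠ u then wgt u (M.m u) else 0) := by
  rw [mwt_eq, ← Finset.sum_sdiff (Finset.subset_univ L)]

end VCW

namespace VCW
open RoommatesInstance

variable {n : ℕ} {H : SimpleGraph (Fin n)} {N : (BGofH H).Matching} {α : BV n → ℝ}

set_option maxHeartbeats 1000000 in
lemma swapA_main {i j : Fin n} (hij : H.Adj i j) (hlt : i < j)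
    (hα : (BGofH H).IsWitness N α) (h01 : ∀ u, α u = 0 ∨ α u = 1 ∨ α u = -1)
    (hmt' : N.m (BV.t' i j) = BV.s' i j) (hms' : N.m (BV.s' i j) = BV.t' i j)
    (hmt'' : N.m (BV.t'' i j) = BV.s'' i j) (hms'' : N.m (BV.s'' i j) = BV.t'' i j)
    (hmt : N.m (BV.t i j) = BV.t i j) (hms : N.m (BV.s i j) = BV.s i j)
    (hza : α (BV.a i) = 1)
    (hnb : ¬ (BGofH H).Better (BV.a i) (BV.t i j) (N.m (BV.a i)))
    (hbj : (BGofH H).Better (BV.b j) (N.m (BV.b j)) (BV.s i j))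
    (hz3 : α (BV.s' i j) = 0) (hz4 : α (BV.t' i j) = 0)
    (hz5 : α (BV.s'' i j) = 0) (hz6 : α (BV.t'' i j) = 0) :
    ∃ N' : (BGofH H).Matching, (BGofH H).Popular N' ∧ mwt H N < mwt H N' := by
  have hz1 : α (BV.s i j) = 0 := unm0 hα hms
  have hz2 : α (BV.t i j) = 0 := unm0 hα hmt
  have mo : ∀ u : BV n, u ≠ BV.s i j → u ≠ BV.t' i j → u ≠ BV.s' i j → u ≠ BV.t i j →
      (N.m u ≠ BV.s i j ∧ N.m u ≠ BV.t' i j ∧ N.m u ≠ BV.s' i j ∧ N.m u ≠ BV.t i j) := by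
    intro u h1 h2 h3 h4
    exact ⟨fun h => h1 ((minv h).symm.trans hms), fun h => h3 ((minv h).symm.trans hmt'),
      fun h => h2 ((minv h).symm.trans hms'), fun h => h4 ((minv h).symm.trans hmt)⟩
  have inv1 : ∀ u, swA H N i j (swA H N i j u) = u := by
    intro u
    by_cases c1 : u = BV.s i j
    · subst c1; rw [swA_s, swA_t']
    by_cases c2 : u = BV.t' i j
    · subst c2; rw [swA_t', swA_s]
    by_cases c3 : u = BV.s' i j
    · subst c3; rw [swA_s', swA_t]
    by_cases c4 : u = BV.t i j
    · subst c4; rw [swA_t, swA_s']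
    obtain ⟨d1, d2, d3, d4⟩ := mo u c1 c2 c3 c4
    rw [swA_other c1 c2 c3 c4, swA_other d1 d2 d3 d4]
    exact N.invol u
  have adj1 : ∀ u, swA H N i j u ≠ u → (BGofH H).adj u (swA H N i j u) := by
    intro u hne
    by_cases c1 : u = BV.s i j
    · subst c1; rw [swA_s]; exact adj_s_t' hij hlt
    by_cases c2 : u = BV.t' i j
    · subst c2; rw [swA_t']; exact adjs (adj_s_t' hij hlt)
    by_cases c3 : u = BV.s' i j
    · subst c3; rw [swA_s']; exact adj_s'_t hij hlt
    by_cases c4 : u = BV.t i j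
    · subst c4; rw [swA_t]; exact adjs (adj_s'_t hij hlt)
    rw [swA_other c1 c2 c3 c4] at hne ⊢
    exact N.adj_of_ne u hne
  refine ⟨⟨swA H N i j, inv1, adj1⟩, ?_, ?_⟩
  case _ =>
    apply popularize (α := wA α i j)
    set N1 : (BGofH H).Matching := ⟨swA H N i j, inv1, adj1⟩ with hN1def
    have n1s : N1.m (BV.s i j) = BV.t' i j := swA_s
    have n1t' : N1.m (BV.t' i j) = BV.s i j := swA_t'
    have n1s' : N1.m (BV.s' i j) = BV.t i j := swA_s'
    have n1t : N1.m (BV.t i j) = BV.s' i j := swA_t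
    have n1o : ∀ u : BV n, u ≠ BV.s i j → u ≠ BV.t' i j → u ≠ BV.s' i j → u ≠ BV.t i j →
        N1.m u = N.m u := fun u a b c d => swA_other a b c d
    have n1s'' : N1.m (BV.s'' i j) = BV.t'' i j := by
      rw [n1o _ (by simp) (by simp) (by simp) (by simp), hms'']
    have n1t'' : N1.m (BV.t'' i j) = BV.s'' i j := by
      rw [n1o _ (by simp) (by simp) (by simp) (by simp), hmt'']
    have n1bj : N1.m (BV.b j) = N.m (BV.b j) :=
      n1o _ (by simp) (by simp) (by simp) (by simp)
    have n1ai : N1.m (BV.a i) = N.m (BV.a i) :=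
      n1o _ (by simp) (by simp) (by simp) (by simp)
    -- the rows
    have row_s : ∀ v, (BGofH H).adj (BV.s i j) v →
        ((BGofH H).cost N1 (BV.s i j) v : ℝ) ≤ wA α i j (BV.s i j) + wA α i j v := by
      intro v hadj
      obtain ⟨hv, -⟩ := nbr_s hadj
      rcases hv with rfl | rfl | rfl
      · rw [cost_matched _ inst_asym n1s (by simp), wA_s, wA_t']; norm_num
      · have hneg : (BGofH H).Negative N1 (BV.s i j) (BV.t'' i j) :=
          ⟨adj_s_t'' hij hlt,
            by rw [n1s]; exact better_rank (adj_s_t' hij hlt) (adj_s_t'' hij hlt) (by norm_num [brank]),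
            by rw [n1t'']; exact better_rank (adjs (adj_s''_t'' hij hlt)) (adjs (adj_s_t'' hij hlt)) (by norm_num [brank])⟩
        rw [cost_eq_neg2 _ inst_asym (by simp) hneg, wA_s, wA_t'']; norm_num
      · have hneg : (BGofH H).Negative N1 (BV.s i j) (BV.b j) :=
          ⟨adjs (adj_b_s hij hlt),
            by rw [n1s]; exact better_rank (adj_s_t' hij hlt) (adjs (adj_b_s hij hlt)) (by norm_num [brank]),
            by rw [n1bj]; exact hbj⟩
        rw [cost_eq_neg2 _ inst_asym (by simp) hneg, wA_s,
          wA_other (by simp) (by simp) (by simp) (by simp) (by simp) (by simp)]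
        have := ge1 h01 (BV.b j)
        push_cast
        linarith
    have row_t : ∀ v, (BGofH H).adj (BV.t i j) v →
        ((BGofH H).cost N1 (BV.t i j) v : ℝ) ≤ wA α i j (BV.t i j) + wA α i j v := by
      intro v hadj
      obtain ⟨hv, -⟩ := nbr_t hadj
      rcases hv with rfl | rfl | rfl
      · rw [cost_matched _ inst_asym n1t (by simp), wA_t, wA_s']; norm_num
      · have h9 : (BGofH H).cost N1 (BV.t i j) (BV.s'' i j) ≤ 0 := by
          refine cost_le_zero _ (by simp) ?_
          rintro ⟨-, -, hx⟩
          rw [n1s''] at hx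
          exact not_better_rank (by simp) (by norm_num [brank]) hx
        have h10 : ((BGofH H).cost N1 (BV.t i j) (BV.s'' i j) : ℝ) ≤ 0 := by exact_mod_cast h9
        rw [wA_t, wA_s'']; linarith
      · have h9 : (BGofH H).cost N1 (BV.t i j) (BV.a i) ≤ 0 := by
          refine cost_le_zero _ (by simp) ?_
          rintro ⟨-, -, hx⟩
          rw [n1ai] at hx
          exact hnb hx
        have h10 : ((BGofH H).cost N1 (BV.t i j) (BV.a i) : ℝ) ≤ 0 := by exact_mod_cast h9
        rw [wA_t, wA_other (by simp) (by simp) (by simp) (by simp) (by simp) (by simp), hza]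
        linarith
    have row_s' : ∀ v, (BGofH H).adj (BV.s' i j) v →
        ((BGofH H).cost N1 (BV.s' i j) v : ℝ) ≤ wA α i j (BV.s' i j) + wA α i j v := by
      intro v hadj
      obtain ⟨hv, -⟩ := nbr_s' hadj
      rcases hv with rfl | rfl
      · have h10 : ((BGofH H).cost N1 (BV.s' i j) (BV.t' i j) : ℝ) ≤ 2 := by
          exact_mod_cast cost_le_two (BGofH H)
        rw [wA_s', wA_t']; linarith
      · rw [cost_matched _ inst_asym n1s' (by simp), wA_s', wA_t]; norm_num
    have row_t' : ∀ v, (BGofH H).adj (BV.t' i j) v →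
        ((BGofH H).cost N1 (BV.t' i j) v : ℝ) ≤ wA α i j (BV.t' i j) + wA α i j v := by
      intro v hadj
      obtain ⟨hv, -⟩ := nbr_t' hadj
      rcases hv with rfl | rfl
      · rw [cost_matched _ inst_asym n1t' (by simp), wA_t', wA_s]; norm_num
      · have h10 : ((BGofH H).cost N1 (BV.t' i j) (BV.s' i j) : ℝ) ≤ 2 := by
          exact_mod_cast cost_le_two (BGofH H)
        rw [wA_t', wA_s']; linarith
    have row_s'' : ∀ v, (BGofH H).adj (BV.s'' i j) v →
        ((BGofH H).cost N1 (BV.s'' i j) v : ℝ) ≤ wA α i j (BV.s'' i j) + wA α i j v := by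
      intro v hadj
      obtain ⟨hv, -⟩ := nbr_s'' hadj
      rcases hv with rfl | rfl
      · rw [cost_matched _ inst_asym n1s'' (by simp), wA_s'', wA_t'']; norm_num
      · have h9 : (BGofH H).cost N1 (BV.s'' i j) (BV.t i j) ≤ 0 := by
          refine cost_le_zero _ (by simp) ?_
          rintro ⟨-, hx, -⟩
          rw [n1s''] at hx
          exact not_better_rank (by simp) (by norm_num [brank]) hx
        have h10 : ((BGofH H).cost N1 (BV.s'' i j) (BV.t i j) : ℝ) ≤ 0 := by exact_mod_cast h9
        rw [wA_s'', wA_t]; linarith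
    have row_t'' : ∀ v, (BGofH H).adj (BV.t'' i j) v →
        ((BGofH H).cost N1 (BV.t'' i j) v : ℝ) ≤ wA α i j (BV.t'' i j) + wA α i j v := by
      intro v hadj
      obtain ⟨hv, -⟩ := nbr_t'' hadj
      rcases hv with rfl | rfl
      · have hneg : (BGofH H).Negative N1 (BV.t'' i j) (BV.s i j) :=
          ⟨adjs (adj_s_t'' hij hlt),
            by rw [n1t'']; exact better_rank (adjs (adj_s''_t'' hij hlt)) (adjs (adj_s_t'' hij hlt)) (by norm_num [brank]),
            by rw [n1s]; exact better_rank (adj_s_t' hij hlt) (adj_s_t'' hij hlt) (by norm_num [brank])⟩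
        rw [cost_eq_neg2 _ inst_asym (by simp) hneg, wA_t'', wA_s]; norm_num
      · rw [cost_matched _ inst_asym n1t'' (by simp), wA_t'', wA_s'']; norm_num
    refine ⟨?_, ?_, ?_⟩
    · -- sum is zero
      classical
      set L : Finset (BV n) :=
        {BV.s i j, BV.t i j, BV.s' i j, BV.t' i j, BV.s'' i j, BV.t'' i j} with hLdef
      have hnotL : ∀ u : BV n, u ∉ L → u ≠ BV.s i j ∧ u ≠ BV.t i j ∧ u ≠ BV.s' i j ∧
          u ≠ BV.t' i j ∧ u ≠ BV.s'' i j ∧ u ≠ BV.t'' i j := by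
        intro u hu
        refine ⟨?_, ?_, ?_, ?_, ?_, ?_⟩ <;> rintro rfl <;> apply hu <;> simp [hLdef]
      have hsplit : ∀ f : BV n → ℝ, ∑ u, f u =
          ∑ u ∈ Finset.univ \ L, f u + ∑ u ∈ L, f u :=
        fun f => (Finset.sum_sdiff (Finset.subset_univ L)).symm
      have hcongr : ∑ u ∈ Finset.univ \ L, wA α i j u = ∑ u ∈ Finset.univ \ L, α u := by
        refine Finset.sum_congr rfl (fun u hu => ?_)
        obtain ⟨e1, e2, e3, e4, e5, e6⟩ := hnotL u (Finset.mem_sdiff.1 hu).2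
        exact wA_other e1 e2 e3 e4 e5 e6
      have hLw : ∑ u ∈ L, wA α i j u = 0 := by
        rw [hLdef]
        rw [Finset.sum_insert (by simp), Finset.sum_insert (by simp),
          Finset.sum_insert (by simp), Finset.sum_insert (by simp),
          Finset.sum_insert (by simp), Finset.sum_singleton]
        rw [wA_s, wA_t, wA_s', wA_t', wA_s'', wA_t'']
        norm_num
      have hLa : ∑ u ∈ L, α u = 0 := by
        rw [hLdef]
        rw [Finset.sum_insert (by simp), Finset.sum_insert (by simp),
          Finset.sum_insert (by simp), Finset.sum_insert (by simp),
          Finset.sum_insert (by simp), Finset.sum_singleton]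
        rw [hz1, hz2, hz3, hz4, hz5, hz6]
        norm_num
      calc ∑ u, wA α i j u = ∑ u ∈ Finset.univ \ L, wA α i j u + ∑ u ∈ L, wA α i j u :=
            hsplit _
        _ = ∑ u ∈ Finset.univ \ L, α u + ∑ u ∈ L, α u := by rw [hcongr, hLw, hLa]
        _ = ∑ u, α u := (hsplit α).symm
        _ = 0 := hα.1
    · -- edge constraints
      intro u v hadj
      by_cases c1 : u = BV.s i j
      · subst c1; exact row_s v hadj
      by_cases c2 : u = BV.t i j
      · subst c2; exact row_t v hadj
      by_cases c3 : u = BV.s' i j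
      · subst c3; exact row_s' v hadj
      by_cases c4 : u = BV.t' i j
      · subst c4; exact row_t' v hadj
      by_cases c5 : u = BV.s'' i j
      · subst c5; exact row_s'' v hadj
      by_cases c6 : u = BV.t'' i j
      · subst c6; exact row_t'' v hadj
      by_cases d1 : v = BV.s i j
      · subst d1; rw [(BGofH H).cost_comm, add_comm]; exact row_s u (adjs hadj)
      by_cases d2 : v = BV.t i j
      · subst d2; rw [(BGofH H).cost_comm, add_comm]; exact row_t u (adjs hadj)
      by_cases d3 : v = BV.s' i j
      · subst d3; rw [(BGofH H).cost_comm, add_comm]; exact row_s' u (adjs hadj)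
      by_cases d4 : v = BV.t' i j
      · subst d4; rw [(BGofH H).cost_comm, add_comm]; exact row_t' u (adjs hadj)
      by_cases d5 : v = BV.s'' i j
      · subst d5; rw [(BGofH H).cost_comm, add_comm]; exact row_s'' u (adjs hadj)
      by_cases d6 : v = BV.t'' i j
      · subst d6; rw [(BGofH H).cost_comm, add_comm]; exact row_t'' u (adjs hadj)
      rw [cost_congr _ (n1o u c1 c4 c3 c2) (n1o v d1 d4 d3 d2),
        wA_other c1 c2 c3 c4 c5 c6, wA_other d1 d2 d3 d4 d5 d6]
      exact hα.2.1 u v hadj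
    · -- vertex constraints
      intro u
      have hval : ∀ w : BV n, N1.m u = w → u ≠ w → ((BGofH H).cost N1 u u : ℝ) = -1 := by
        intro w hw hne
        have : (BGofH H).cost N1 u u = -1 := by
          unfold RoommatesInstance.cost
          rw [if_pos rfl, if_neg (by rw [hw]; exact fun h => hne h.symm)]
        rw [this]; norm_num
      by_cases c1 : u = BV.s i j
      · subst c1; rw [hval _ n1s (by simp), wA_s]
      by_cases c2 : u = BV.t i j
      · subst c2; rw [hval _ n1t (by simp), wA_t]
      by_cases c3 : u = BV.s' i j
      · subst c3; rw [hval _ n1s' (by simp), wA_s']; norm_num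
      by_cases c4 : u = BV.t' i j
      · subst c4; rw [hval _ n1t' (by simp), wA_t']; norm_num
      by_cases c5 : u = BV.s'' i j
      · subst c5; rw [hval _ n1s'' (by simp), wA_s'']; norm_num
      by_cases c6 : u = BV.t'' i j
      · subst c6; rw [hval _ n1t'' (by simp), wA_t'']
      rw [cost_congr _ (n1o u c1 c4 c3 c2) (n1o u c1 c4 c3 c2),
        wA_other c1 c2 c3 c4 c5 c6]
      exact hα.2.2 u
  case _ =>
    -- weight increases
    classical
    set N1 : (BGofH H).Matching := ⟨swA H N i j, inv1, adj1⟩ with hN1def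
    have n1o : ∀ u : BV n, u ≠ BV.s i j → u ≠ BV.t' i j → u ≠ BV.s' i j → u ≠ BV.t i j →
        N1.m u = N.m u := fun u a b c d => swA_other a b c d
    set L : Finset (BV n) :=
      {BV.s i j, BV.t i j, BV.s' i j, BV.t' i j, BV.s'' i j, BV.t'' i j} with hLdef
    have hnotL : ∀ u : BV n, u ∉ L → u ≠ BV.s i j ∧ u ≠ BV.t i j ∧ u ≠ BV.s' i j ∧
        u ≠ BV.t' i j ∧ u ≠ BV.s'' i j ∧ u ≠ BV.t'' i j := by
      intro u hu
      refine ⟨?_, ?_, ?_, ?_, ?_, ?_⟩ <;> rintro rfl <;> apply hu <;> simp [hLdef]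
    have hc : ∑ u ∈ Finset.univ \ L, (if N1.m u ≠ u then wgt u (N1.m u) else 0) =
        ∑ u ∈ Finset.univ \ L, (if N.m u ≠ u then wgt u (N.m u) else 0) := by
      refine Finset.sum_congr rfl (fun u hu => ?_)
      obtain ⟨e1, e2, e3, e4, e5, e6⟩ := hnotL u (Finset.mem_sdiff.1 hu).2
      rw [n1o u e1 e4 e3 e2]
    have hL1 : ∑ u ∈ L, (if N.m u ≠ u then wgt u (N.m u) else 0) = 4 := by
      rw [hLdef]
      rw [Finset.sum_insert (by simp), Finset.sum_insert (by simp),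
        Finset.sum_insert (by simp), Finset.sum_insert (by simp),
        Finset.sum_insert (by simp), Finset.sum_singleton]
      rw [hms, hmt, hms', hmt', hms'', hmt'']
      rw [if_neg (by simp), if_neg (by simp), if_pos (by simp), if_pos (by simp),
        if_pos (by simp), if_pos (by simp)]
      rw [wgt_s'_t', wgt_t'_s', wgt_s''_t'', wgt_t''_s'']
      norm_num
    have hL2 : ∑ u ∈ L, (if N1.m u ≠ u then wgt u (N1.m u) else 0) = 10 := by
      rw [hLdef]
      rw [Finset.sum_insert (by simp), Finset.sum_insert (by simp),
        Finset.sum_insert (by simp), Finset.sum_insert (by simp),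
        Finset.sum_insert (by simp), Finset.sum_singleton]
      have g1 : N1.m (BV.s i j) = BV.t' i j := swA_s
      have g2 : N1.m (BV.t i j) = BV.s' i j := swA_t
      have g3 : N1.m (BV.s' i j) = BV.t i j := swA_s'
      have g4 : N1.m (BV.t' i j) = BV.s i j := swA_t'
      have g5 : N1.m (BV.s'' i j) = BV.t'' i j := by
        rw [n1o _ (by simp) (by simp) (by simp) (by simp), hms'']
      have g6 : N1.m (BV.t'' i j) = BV.s'' i j := by
        rw [n1o _ (by simp) (by simp) (by simp) (by simp), hmt'']
      rw [g1, g2, g3, g4, g5, g6]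
      rw [if_pos (by simp), if_pos (by simp), if_pos (by simp), if_pos (by simp),
        if_pos (by simp), if_pos (by simp)]
      rw [wgt_s_t', wgt_t_s', wgt_s'_t, wgt_t'_s, wgt_s''_t'', wgt_t''_s'']
      norm_num
    rw [mwt_split N L, mwt_split N1 L, hc, hL1, hL2]
    omega

end VCW

namespace VCW
open RoommatesInstance

variable {n : ℕ}

/-- The matching for the config-(iii) + C-gadget swap. -/
def swB (H : SimpleGraph (Fin n)) (N : (BGofH H).Matching) (i j : Fin n) : BV n → BV n :=
  fun u =>
    if u = BV.s i j then BV.t' i j else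
    if u = BV.t' i j then BV.s i j else
    if u = BV.s' i j then BV.t i j else
    if u = BV.t i j then BV.s' i j else
    if u = BV.a i then BV.b' i else
    if u = BV.b' i then BV.a i else
    if u = BV.a' i then BV.b i else
    if u = BV.b i then BV.a' i else N.m u

/-- The witness for the config-(iii) + C-gadget swap. -/
noncomputable def wB (α : BV n → ℝ) (i j : Fin n) : BV n → ℝ :=
  fun u =>
    if u = BV.s i j then -1 else
    if u = BV.t i j then -1 else
    if u = BV.s' i j then 1 else
    if u = BV.t' i j then 1 else
    if u = BV.s'' i j then 1 else
    if u = BV.t'' i j then -1 else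
    if u = BV.a i then 1 else
    if u = BV.b i then 1 else
    if u = BV.a' i then -1 else
    if u = BV.b' i then -1 else α u

variable {H : SimpleGraph (Fin n)} {N : (BGofH H).Matching} {α : BV n → ℝ} {i j : Fin n}

lemma swB_s : swB H N i j (BV.s i j) = BV.t' i j := by simp [swB]
lemma swB_t' : swB H N i j (BV.t' i j) = BV.s i j := by simp [swB]
lemma swB_s' : swB H N i j (BV.s' i j) = BV.t i j := by simp [swB]
lemma swB_t : swB H N i j (BV.t i j) = BV.s' i j := by simp [swB]
lemma swB_a : swB H N i j (BV.a i) = BV.b' i := by simp [swB]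
lemma swB_b' : swB H N i j (BV.b' i) = BV.a i := by simp [swB]
lemma swB_a' : swB H N i j (BV.a' i) = BV.b i := by simp [swB]
lemma swB_b : swB H N i j (BV.b i) = BV.a' i := by simp [swB]
lemma swB_other {u : BV n} (h1 : u ≠ BV.s i j) (h2 : u ≠ BV.t' i j) (h3 : u ≠ BV.s' i j)
    (h4 : u ≠ BV.t i j) (h5 : u ≠ BV.a i) (h6 : u ≠ BV.b' i) (h7 : u ≠ BV.a' i)
    (h8 : u ≠ BV.b i) : swB H N i j u = N.m u := by
  simp [swB, h1, h2, h3, h4, h5, h6, h7, h8]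

lemma wB_s : wB α i j (BV.s i j) = -1 := by simp [wB]
lemma wB_t : wB α i j (BV.t i j) = -1 := by simp [wB]
lemma wB_s' : wB α i j (BV.s' i j) = 1 := by simp [wB]
lemma wB_t' : wB α i j (BV.t' i j) = 1 := by simp [wB]
lemma wB_s'' : wB α i j (BV.s'' i j) = 1 := by simp [wB]
lemma wB_t'' : wB α i j (BV.t'' i j) = -1 := by simp [wB]
lemma wB_a : wB α i j (BV.a i) = 1 := by simp [wB]
lemma wB_b : wB α i j (BV.b i) = 1 := by simp [wB]
lemma wB_a' : wB α i j (BV.a' i) = -1 := by simp [wB]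
lemma wB_b' : wB α i j (BV.b' i) = -1 := by simp [wB]
lemma wB_other {u : BV n} (h1 : u ≠ BV.s i j) (h2 : u ≠ BV.t i j) (h3 : u ≠ BV.s' i j)
    (h4 : u ≠ BV.t' i j) (h5 : u ≠ BV.s'' i j) (h6 : u ≠ BV.t'' i j) (h7 : u ≠ BV.a i)
    (h8 : u ≠ BV.b i) (h9 : u ≠ BV.a' i) (h10 : u ≠ BV.b' i) :
    wB α i j u = α u := by simp [wB, h1, h2, h3, h4, h5, h6, h7, h8, h9, h10]

lemma wB_ge (h01 : ∀ u, α u = 0 ∨ α u = 1 ∨ α u = -1) (v : BV n) : -1 ≤ wB α i j v := by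
  by_cases h1 : v = BV.s i j
  · subst h1; rw [wB_s]
  by_cases h2 : v = BV.t i j
  · subst h2; rw [wB_t]
  by_cases h3 : v = BV.s' i j
  · subst h3; rw [wB_s']; norm_num
  by_cases h4 : v = BV.t' i j
  · subst h4; rw [wB_t']; norm_num
  by_cases h5 : v = BV.s'' i j
  · subst h5; rw [wB_s'']; norm_num
  by_cases h6 : v = BV.t'' i j
  · subst h6; rw [wB_t'']
  by_cases h7 : v = BV.a i
  · subst h7; rw [wB_a]; norm_num
  by_cases h8 : v = BV.b i
  · subst h8; rw [wB_b]; norm_num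
  by_cases h9 : v = BV.a' i
  · subst h9; rw [wB_a']
  by_cases h10 : v = BV.b' i
  · subst h10; rw [wB_b']
  rw [wB_other h1 h2 h3 h4 h5 h6 h7 h8 h9 h10]
  exact ge1 h01 v

lemma wgt_a_b : wgt (BV.a i) (BV.b i) = 2 := by
  unfold wgt; rw [if_pos]; exact Or.inl (Or.inr (Or.inr (Or.inl ⟨i, rfl, rfl⟩)))
lemma wgt_b_a : wgt (BV.b i) (BV.a i) = 2 := by
  unfold wgt; rw [if_pos]; exact Or.inr (Or.inr (Or.inr (Or.inl ⟨i, rfl, rfl⟩)))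
lemma wgt_a'_b' : wgt (BV.a' i) (BV.b' i) = 2 := by
  unfold wgt; rw [if_pos]; exact Or.inl (Or.inr (Or.inr (Or.inr ⟨i, rfl, rfl⟩)))
lemma wgt_b'_a' : wgt (BV.b' i) (BV.a' i) = 2 := by
  unfold wgt; rw [if_pos]; exact Or.inr (Or.inr (Or.inr (Or.inr ⟨i, rfl, rfl⟩)))
lemma wgt_a_b' : wgt (BV.a i) (BV.b' i) = 1 := by
  unfold wgt; rw [if_neg]; rintro (h | h) <;> simp [wspecial] at h
lemma wgt_b'_a : wgt (BV.b' i) (BV.a i) = 1 := by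
  unfold wgt; rw [if_neg]; rintro (h | h) <;> simp [wspecial] at h
lemma wgt_a'_b : wgt (BV.a' i) (BV.b i) = 1 := by
  unfold wgt; rw [if_neg]; rintro (h | h) <;> simp [wspecial] at h
lemma wgt_b_a' : wgt (BV.b i) (BV.a' i) = 1 := by
  unfold wgt; rw [if_neg]; rintro (h | h) <;> simp [wspecial] at h

end VCW

namespace VCW
open RoommatesInstance

variable {n : ℕ} {H : SimpleGraph (Fin n)} {N : (BGofH H).Matching} {α : BV n → ℝ}

set_option maxHeartbeats 2000000 in
lemma swapB_main {i j : Fin n} (hij : H.Adj i j) (hlt : i < j)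
    (hα : (BGofH H).IsWitness N α) (h01 : ∀ u, α u = 0 ∨ α u = 1 ∨ α u = -1)
    (hmt' : N.m (BV.t' i j) = BV.s' i j) (hms' : N.m (BV.s' i j) = BV.t' i j)
    (hmt'' : N.m (BV.t'' i j) = BV.s'' i j) (hms'' : N.m (BV.s'' i j) = BV.t'' i j)
    (hmt : N.m (BV.t i j) = BV.t i j) (hms : N.m (BV.s i j) = BV.s i j)
    (hma : N.m (BV.a i) = BV.b i) (hmb' : N.m (BV.b' i) = BV.a' i)
    (hbj : (BGofH H).Better (BV.b j) (N.m (BV.b j)) (BV.s i j))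
    (hz3 : α (BV.s' i j) = 0) (hz4 : α (BV.t' i j) = 0)
    (hz5 : α (BV.s'' i j) = 0) (hz6 : α (BV.t'' i j) = 0)
    (hza0 : α (BV.a i) = 0) (hzb0 : α (BV.b i) = 0)
    (hza'0 : α (BV.a' i) = 0) (hzb'0 : α (BV.b' i) = 0) :
    ∃ N' : (BGofH H).Matching, (BGofH H).Popular N' ∧ mwt H N < mwt H N' := by
  have hz1 : α (BV.s i j) = 0 := unm0 hα hms
  have hz2 : α (BV.t i j) = 0 := unm0 hα hmt
  have hmb : N.m (BV.b i) = BV.a i := minv hma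
  have hma' : N.m (BV.a' i) = BV.b' i := minv hmb'
  have hbji : BV.b j ≠ BV.b i := by
    simp only [ne_eq, BV.b.injEq]
    exact fun h => Fin.ne_of_lt hlt h.symm
  have mo : ∀ u : BV n, u ≠ BV.s i j → u ≠ BV.t' i j → u ≠ BV.s' i j → u ≠ BV.t i j →
      u ≠ BV.a i → u ≠ BV.b' i → u ≠ BV.a' i → u ≠ BV.b i →
      (N.m u ≠ BV.s i j ∧ N.m u ≠ BV.t' i j ∧ N.m u ≠ BV.s' i j ∧ N.m u ≠ BV.t i j ∧
       N.m u ≠ BV.a i ∧ N.m u ≠ BV.b' i ∧ N.m u ≠ BV.a' i ∧ N.m u ≠ BV.b i) := by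
    intro u h1 h2 h3 h4 h5 h6 h7 h8
    exact ⟨fun h => h1 ((minv h).symm.trans hms), fun h => h3 ((minv h).symm.trans hmt'),
      fun h => h2 ((minv h).symm.trans hms'), fun h => h4 ((minv h).symm.trans hmt),
      fun h => h8 ((minv h).symm.trans hma), fun h => h7 ((minv h).symm.trans hmb'),
      fun h => h6 ((minv h).symm.trans hma'), fun h => h5 ((minv h).symm.trans hmb)⟩
  have inv1 : ∀ u, swB H N i j (swB H N i j u) = u := by
    intro u
    by_cases c1 : u = BV.s i j
    · subst c1; rw [swB_s, swB_t']
    by_cases c2 : u = BV.t' i j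
    · subst c2; rw [swB_t', swB_s]
    by_cases c3 : u = BV.s' i j
    · subst c3; rw [swB_s', swB_t]
    by_cases c4 : u = BV.t i j
    · subst c4; rw [swB_t, swB_s']
    by_cases c5 : u = BV.a i
    · subst c5; rw [swB_a, swB_b']
    by_cases c6 : u = BV.b' i
    · subst c6; rw [swB_b', swB_a]
    by_cases c7 : u = BV.a' i
    · subst c7; rw [swB_a', swB_b]
    by_cases c8 : u = BV.b i
    · subst c8; rw [swB_b, swB_a']
    obtain ⟨d1, d2, d3, d4, d5, d6, d7, d8⟩ := mo u c1 c2 c3 c4 c5 c6 c7 c8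
    rw [swB_other c1 c2 c3 c4 c5 c6 c7 c8, swB_other d1 d2 d3 d4 d5 d6 d7 d8]
    exact N.invol u
  have adj1 : ∀ u, swB H N i j u ≠ u → (BGofH H).adj u (swB H N i j u) := by
    intro u hne
    by_cases c1 : u = BV.s i j
    · subst c1; rw [swB_s]; exact adj_s_t' hij hlt
    by_cases c2 : u = BV.t' i j
    · subst c2; rw [swB_t']; exact adjs (adj_s_t' hij hlt)
    by_cases c3 : u = BV.s' i j
    · subst c3; rw [swB_s']; exact adj_s'_t hij hlt
    by_cases c4 : u = BV.t i j
    · subst c4; rw [swB_t]; exact adjs (adj_s'_t hij hlt)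
    by_cases c5 : u = BV.a i
    · subst c5; rw [swB_a]; exact adj_a_b' i
    by_cases c6 : u = BV.b' i
    · subst c6; rw [swB_b']; exact adjs (adj_a_b' i)
    by_cases c7 : u = BV.a' i
    · subst c7; rw [swB_a']; exact adj_a'_b i
    by_cases c8 : u = BV.b i
    · subst c8; rw [swB_b]; exact adjs (adj_a'_b i)
    rw [swB_other c1 c2 c3 c4 c5 c6 c7 c8] at hne ⊢
    exact N.adj_of_ne u hne
  refine ⟨⟨swB H N i j, inv1, adj1⟩, ?_, ?_⟩
  case _ =>
    apply popularize (α := wB α i j)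
    set N1 : (BGofH H).Matching := ⟨swB H N i j, inv1, adj1⟩ with hN1def
    have n1s : N1.m (BV.s i j) = BV.t' i j := swB_s
    have n1t' : N1.m (BV.t' i j) = BV.s i j := swB_t'
    have n1s' : N1.m (BV.s' i j) = BV.t i j := swB_s'
    have n1t : N1.m (BV.t i j) = BV.s' i j := swB_t
    have n1a : N1.m (BV.a i) = BV.b' i := swB_a (j := j)
    have n1b' : N1.m (BV.b' i) = BV.a i := swB_b' (j := j)
    have n1a' : N1.m (BV.a' i) = BV.b i := swB_a' (j := j)
    have n1b : N1.m (BV.b i) = BV.a' i := swB_b (j := j)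
    have n1o : ∀ u : BV n, u ≠ BV.s i j → u ≠ BV.t' i j → u ≠ BV.s' i j → u ≠ BV.t i j →
        u ≠ BV.a i → u ≠ BV.b' i → u ≠ BV.a' i → u ≠ BV.b i → N1.m u = N.m u :=
      fun u a b c d e f g h => swB_other a b c d e f g h
    have n1s'' : N1.m (BV.s'' i j) = BV.t'' i j := by
      rw [n1o _ (by simp) (by simp) (by simp) (by simp) (by simp) (by simp) (by simp) (by simp), hms'']
    have n1t'' : N1.m (BV.t'' i j) = BV.s'' i j := by
      rw [n1o _ (by simp) (by simp) (by simp) (by simp) (by simp) (by simp) (by simp) (by simp), hmt'']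
    have n1bj : N1.m (BV.b j) = N.m (BV.b j) :=
      n1o _ (by simp) (by simp) (by simp) (by simp) (by simp) (by simp) (by simp) hbji
    have row_s : ∀ v, (BGofH H).adj (BV.s i j) v →
        ((BGofH H).cost N1 (BV.s i j) v : ℝ) ≤ wB α i j (BV.s i j) + wB α i j v := by
      intro v hadj
      obtain ⟨hv, -⟩ := nbr_s hadj
      rcases hv with rfl | rfl | rfl
      · rw [cost_matched _ inst_asym n1s (by simp), wB_s, wB_t']; norm_num
      · have hneg : (BGofH H).Negative N1 (BV.s i j) (BV.t'' i j) :=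
          ⟨adj_s_t'' hij hlt,
            by rw [n1s]; exact better_rank (adj_s_t' hij hlt) (adj_s_t'' hij hlt) (by norm_num [brank]),
            by rw [n1t'']; exact better_rank (adjs (adj_s''_t'' hij hlt)) (adjs (adj_s_t'' hij hlt)) (by norm_num [brank])⟩
        rw [cost_eq_neg2 _ inst_asym (by simp) hneg, wB_s, wB_t'']; norm_num
      · have hneg : (BGofH H).Negative N1 (BV.s i j) (BV.b j) :=
          ⟨adjs (adj_b_s hij hlt),
            by rw [n1s]; exact better_rank (adj_s_t' hij hlt) (adjs (adj_b_s hij hlt)) (by norm_num [brank]),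
            by rw [n1bj]; exact hbj⟩
        rw [cost_eq_neg2 _ inst_asym (by simp) hneg, wB_s,
          wB_other (by simp) (by simp) (by simp) (by simp) (by simp) (by simp) (by simp) hbji (by simp) (by simp)]
        have := ge1 h01 (BV.b j)
        push_cast
        linarith
    have row_t : ∀ v, (BGofH H).adj (BV.t i j) v →
        ((BGofH H).cost N1 (BV.t i j) v : ℝ) ≤ wB α i j (BV.t i j) + wB α i j v := by
      intro v hadj
      obtain ⟨hv, -⟩ := nbr_t hadj
      rcases hv with rfl | rfl | rfl
      · rw [cost_matched _ inst_asym n1t (by simp), wB_t, wB_s']; norm_num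
      · have h9 : (BGofH H).cost N1 (BV.t i j) (BV.s'' i j) ≤ 0 := by
          refine cost_le_zero _ (by simp) ?_
          rintro ⟨-, -, hx⟩
          rw [n1s''] at hx
          exact not_better_rank (by simp) (by norm_num [brank]) hx
        have h10 : ((BGofH H).cost N1 (BV.t i j) (BV.s'' i j) : ℝ) ≤ 0 := by exact_mod_cast h9
        rw [wB_t, wB_s'']; linarith
      · have h9 : (BGofH H).cost N1 (BV.t i j) (BV.a i) ≤ 0 := by
          refine cost_le_zero _ (by simp) ?_
          rintro ⟨-, -, hx⟩
          rw [n1a] at hx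
          exact not_better_rank (by simp) (by simp only [brank]; omega) hx
        have h10 : ((BGofH H).cost N1 (BV.t i j) (BV.a i) : ℝ) ≤ 0 := by exact_mod_cast h9
        rw [wB_t, wB_a]; linarith
    have row_s' : ∀ v, (BGofH H).adj (BV.s' i j) v →
        ((BGofH H).cost N1 (BV.s' i j) v : ℝ) ≤ wB α i j (BV.s' i j) + wB α i j v := by
      intro v hadj
      obtain ⟨hv, -⟩ := nbr_s' hadj
      rcases hv with rfl | rfl
      · have h10 : ((BGofH H).cost N1 (BV.s' i j) (BV.t' i j) : ℝ) ≤ 2 := by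
          exact_mod_cast cost_le_two (BGofH H)
        rw [wB_s', wB_t']; linarith
      · rw [cost_matched _ inst_asym n1s' (by simp), wB_s', wB_t]; norm_num
    have row_t' : ∀ v, (BGofH H).adj (BV.t' i j) v →
        ((BGofH H).cost N1 (BV.t' i j) v : ℝ) ≤ wB α i j (BV.t' i j) + wB α i j v := by
      intro v hadj
      obtain ⟨hv, -⟩ := nbr_t' hadj
      rcases hv with rfl | rfl
      · rw [cost_matched _ inst_asym n1t' (by simp), wB_t', wB_s]; norm_num
      · have h10 : ((BGofH H).cost N1 (BV.t' i j) (BV.s' i j) : ℝ) ≤ 2 := by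
          exact_mod_cast cost_le_two (BGofH H)
        rw [wB_t', wB_s']; linarith
    have row_s'' : ∀ v, (BGofH H).adj (BV.s'' i j) v →
        ((BGofH H).cost N1 (BV.s'' i j) v : ℝ) ≤ wB α i j (BV.s'' i j) + wB α i j v := by
      intro v hadj
      obtain ⟨hv, -⟩ := nbr_s'' hadj
      rcases hv with rfl | rfl
      · rw [cost_matched _ inst_asym n1s'' (by simp), wB_s'', wB_t'']; norm_num
      · have h9 : (BGofH H).cost N1 (BV.s'' i j) (BV.t i j) ≤ 0 := by
          refine cost_le_zero _ (by simp) ?_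
          rintro ⟨-, hx, -⟩
          rw [n1s''] at hx
          exact not_better_rank (by simp) (by norm_num [brank]) hx
        have h10 : ((BGofH H).cost N1 (BV.s'' i j) (BV.t i j) : ℝ) ≤ 0 := by exact_mod_cast h9
        rw [wB_s'', wB_t]; linarith
    have row_t'' : ∀ v, (BGofH H).adj (BV.t'' i j) v →
        ((BGofH H).cost N1 (BV.t'' i j) v : ℝ) ≤ wB α i j (BV.t'' i j) + wB α i j v := by
      intro v hadj
      obtain ⟨hv, -⟩ := nbr_t'' hadj
      rcases hv with rfl | rfl
      · have hneg : (BGofH H).Negative N1 (BV.t'' i j) (BV.s i j) :=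
          ⟨adjs (adj_s_t'' hij hlt),
            by rw [n1t'']; exact better_rank (adjs (adj_s''_t'' hij hlt)) (adjs (adj_s_t'' hij hlt)) (by norm_num [brank]),
            by rw [n1s]; exact better_rank (adj_s_t' hij hlt) (adj_s_t'' hij hlt) (by norm_num [brank])⟩
        rw [cost_eq_neg2 _ inst_asym (by simp) hneg, wB_t'', wB_s]; norm_num
      · rw [cost_matched _ inst_asym n1t'' (by simp), wB_t'', wB_s'']; norm_num
    have row_a : ∀ v, (BGofH H).adj (BV.a i) v →
        ((BGofH H).cost N1 (BV.a i) v : ℝ) ≤ wB α i j (BV.a i) + wB α i j v := by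
      intro v hadj
      rcases nbr_a hadj with rfl | rfl | rfl | ⟨k, rfl, -, -⟩
      · have h10 : ((BGofH H).cost N1 (BV.a i) (BV.b i) : ℝ) ≤ 2 := by
          exact_mod_cast cost_le_two (BGofH H)
        rw [wB_a, wB_b]; linarith
      · rw [cost_matched _ inst_asym n1a (by simp), wB_a, wB_b']; norm_num
      · have h9 : (BGofH H).cost N1 (BV.a i) BV.b0 ≤ 0 := by
          refine cost_le_zero _ (by simp) ?_
          rintro ⟨-, hx, -⟩
          rw [n1a] at hx
          exact not_better_rank (by simp) (by norm_num [brank]) hx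
        have h10 : ((BGofH H).cost N1 (BV.a i) BV.b0 : ℝ) ≤ 0 := by exact_mod_cast h9
        rw [wB_a]
        have := wB_ge (α := α) (i := i) (j := j) h01 BV.b0
        linarith
      · have h9 : (BGofH H).cost N1 (BV.a i) (BV.t i k) ≤ 0 := by
          refine cost_le_zero _ (by simp) ?_
          rintro ⟨-, hx, -⟩
          rw [n1a] at hx
          exact not_better_rank (by simp) (by simp only [brank]; omega) hx
        have h10 : ((BGofH H).cost N1 (BV.a i) (BV.t i k) : ℝ) ≤ 0 := by exact_mod_cast h9
        rw [wB_a]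
        have := wB_ge (α := α) (i := i) (j := j) h01 (BV.t i k)
        linarith
    have row_b : ∀ v, (BGofH H).adj (BV.b i) v →
        ((BGofH H).cost N1 (BV.b i) v : ℝ) ≤ wB α i j (BV.b i) + wB α i j v := by
      intro v hadj
      rcases nbr_b hadj with rfl | rfl | rfl | ⟨k, rfl, -, -⟩
      · have h10 : ((BGofH H).cost N1 (BV.b i) (BV.a i) : ℝ) ≤ 2 := by
          exact_mod_cast cost_le_two (BGofH H)
        rw [wB_b, wB_a]; linarith
      · rw [cost_matched _ inst_asym n1b (by simp), wB_b, wB_a']; norm_num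
      · have h9 : (BGofH H).cost N1 (BV.b i) BV.a0 ≤ 0 := by
          refine cost_le_zero _ (by simp) ?_
          rintro ⟨-, hx, -⟩
          rw [n1b] at hx
          exact not_better_rank (by simp) (by norm_num [brank]) hx
        have h10 : ((BGofH H).cost N1 (BV.b i) BV.a0 : ℝ) ≤ 0 := by exact_mod_cast h9
        rw [wB_b]
        have := wB_ge (α := α) (i := i) (j := j) h01 BV.a0
        linarith
      · have h9 : (BGofH H).cost N1 (BV.b i) (BV.s k i) ≤ 0 := by
          refine cost_le_zero _ (by simp) ?_
          rintro ⟨-, hx, -⟩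
          rw [n1b] at hx
          exact not_better_rank (by simp) (by simp only [brank]; omega) hx
        have h10 : ((BGofH H).cost N1 (BV.b i) (BV.s k i) : ℝ) ≤ 0 := by exact_mod_cast h9
        rw [wB_b]
        have := wB_ge (α := α) (i := i) (j := j) h01 (BV.s k i)
        linarith
    have row_a' : ∀ v, (BGofH H).adj (BV.a' i) v →
        ((BGofH H).cost N1 (BV.a' i) v : ℝ) ≤ wB α i j (BV.a' i) + wB α i j v := by
      intro v hadj
      rcases nbr_a' hadj with rfl | rfl
      · rw [cost_matched _ inst_asym n1a' (by simp), wB_a', wB_b]; norm_num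
      · have hneg : (BGofH H).Negative N1 (BV.a' i) (BV.b' i) :=
          ⟨adj_a'_b' i,
            by rw [n1a']; exact better_rank (adj_a'_b i) (adj_a'_b' i) (by norm_num [brank]),
            by rw [n1b']; exact better_rank (adjs (adj_a_b' i)) (adjs (adj_a'_b' i)) (by norm_num [brank])⟩
        rw [cost_eq_neg2 _ inst_asym (by simp) hneg, wB_a', wB_b']; norm_num
    have row_b' : ∀ v, (BGofH H).adj (BV.b' i) v →
        ((BGofH H).cost N1 (BV.b' i) v : ℝ) ≤ wB α i j (BV.b' i) + wB α i j v := by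
      intro v hadj
      rcases nbr_b' hadj with rfl | rfl
      · rw [cost_matched _ inst_asym n1b' (by simp), wB_b', wB_a]; norm_num
      · have hneg : (BGofH H).Negative N1 (BV.b' i) (BV.a' i) :=
          ⟨adjs (adj_a'_b' i),
            by rw [n1b']; exact better_rank (adjs (adj_a_b' i)) (adjs (adj_a'_b' i)) (by norm_num [brank]),
            by rw [n1a']; exact better_rank (adj_a'_b i) (adj_a'_b' i) (by norm_num [brank])⟩
        rw [cost_eq_neg2 _ inst_asym (by simp) hneg, wB_b', wB_a']; norm_num
    refine ⟨?_, ?_, ?_⟩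
    · classical
      set L : Finset (BV n) :=
        {BV.s i j, BV.t i j, BV.s' i j, BV.t' i j, BV.s'' i j, BV.t'' i j,
         BV.a i, BV.b i, BV.a' i, BV.b' i} with hLdef
      have hnotL : ∀ u : BV n, u ∉ L → u ≠ BV.s i j ∧ u ≠ BV.t i j ∧ u ≠ BV.s' i j ∧
          u ≠ BV.t' i j ∧ u ≠ BV.s'' i j ∧ u ≠ BV.t'' i j ∧ u ≠ BV.a i ∧ u ≠ BV.b i ∧
          u ≠ BV.a' i ∧ u ≠ BV.b' i := by
        intro u hu
        refine ⟨?_, ?_, ?_, ?_, ?_, ?_, ?_, ?_, ?_, ?_⟩ <;> rintro rfl <;> apply hu <;>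
          simp [hLdef]
      have hsplit : ∀ f : BV n → ℝ, ∑ u, f u =
          ∑ u ∈ Finset.univ \ L, f u + ∑ u ∈ L, f u :=
        fun f => (Finset.sum_sdiff (Finset.subset_univ L)).symm
      have hcongr : ∑ u ∈ Finset.univ \ L, wB α i j u = ∑ u ∈ Finset.univ \ L, α u := by
        refine Finset.sum_congr rfl (fun u hu => ?_)
        obtain ⟨e1, e2, e3, e4, e5, e6, e7, e8, e9, e10⟩ := hnotL u (Finset.mem_sdiff.1 hu).2
        exact wB_other e1 e2 e3 e4 e5 e6 e7 e8 e9 e10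
      have hLw : ∑ u ∈ L, wB α i j u = 0 := by
        rw [hLdef]
        rw [Finset.sum_insert (by simp), Finset.sum_insert (by simp),
          Finset.sum_insert (by simp), Finset.sum_insert (by simp),
          Finset.sum_insert (by simp), Finset.sum_insert (by simp),
          Finset.sum_insert (by simp), Finset.sum_insert (by simp),
          Finset.sum_insert (by simp), Finset.sum_singleton]
        rw [wB_s, wB_t, wB_s', wB_t', wB_s'', wB_t'', wB_a, wB_b, wB_a', wB_b']
        norm_num
      have hLa : ∑ u ∈ L, α u = 0 := by
        rw [hLdef]
        rw [Finset.sum_insert (by simp), Finset.sum_insert (by simp),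
          Finset.sum_insert (by simp), Finset.sum_insert (by simp),
          Finset.sum_insert (by simp), Finset.sum_insert (by simp),
          Finset.sum_insert (by simp), Finset.sum_insert (by simp),
          Finset.sum_insert (by simp), Finset.sum_singleton]
        rw [hz1, hz2, hz3, hz4, hz5, hz6, hza0, hzb0, hza'0, hzb'0]
        norm_num
      calc ∑ u, wB α i j u = ∑ u ∈ Finset.univ \ L, wB α i j u + ∑ u ∈ L, wB α i j u :=
            hsplit _
        _ = ∑ u ∈ Finset.univ \ L, α u + ∑ u ∈ L, α u := by rw [hcongr, hLw, hLa]
        _ = ∑ u, α u := (hsplit α).symm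
        _ = 0 := hα.1
    · intro u v hadj
      by_cases c1 : u = BV.s i j
      · subst c1; exact row_s v hadj
      by_cases c2 : u = BV.t i j
      · subst c2; exact row_t v hadj
      by_cases c3 : u = BV.s' i j
      · subst c3; exact row_s' v hadj
      by_cases c4 : u = BV.t' i j
      · subst c4; exact row_t' v hadj
      by_cases c5 : u = BV.s'' i j
      · subst c5; exact row_s'' v hadj
      by_cases c6 : u = BV.t'' i j
      · subst c6; exact row_t'' v hadj
      by_cases c7 : u = BV.a i
      · subst c7; exact row_a v hadj
      by_cases c8 : u = BV.b i
      · subst c8; exact row_b v hadj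
      by_cases c9 : u = BV.a' i
      · subst c9; exact row_a' v hadj
      by_cases c10 : u = BV.b' i
      · subst c10; exact row_b' v hadj
      by_cases d1 : v = BV.s i j
      · subst d1; rw [(BGofH H).cost_comm, add_comm]; exact row_s u (adjs hadj)
      by_cases d2 : v = BV.t i j
      · subst d2; rw [(BGofH H).cost_comm, add_comm]; exact row_t u (adjs hadj)
      by_cases d3 : v = BV.s' i j
      · subst d3; rw [(BGofH H).cost_comm, add_comm]; exact row_s' u (adjs hadj)
      by_cases d4 : v = BV.t' i j
      · subst d4; rw [(BGofH H).cost_comm, add_comm]; exact row_t' u (adjs hadj)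
      by_cases d5 : v = BV.s'' i j
      · subst d5; rw [(BGofH H).cost_comm, add_comm]; exact row_s'' u (adjs hadj)
      by_cases d6 : v = BV.t'' i j
      · subst d6; rw [(BGofH H).cost_comm, add_comm]; exact row_t'' u (adjs hadj)
      by_cases d7 : v = BV.a i
      · subst d7; rw [(BGofH H).cost_comm, add_comm]; exact row_a u (adjs hadj)
      by_cases d8 : v = BV.b i
      · subst d8; rw [(BGofH H).cost_comm, add_comm]; exact row_b u (adjs hadj)
      by_cases d9 : v = BV.a' i
      · subst d9; rw [(BGofH H).cost_comm, add_comm]; exact row_a' u (adjs hadj)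
      by_cases d10 : v = BV.b' i
      · subst d10; rw [(BGofH H).cost_comm, add_comm]; exact row_b' u (adjs hadj)
      rw [cost_congr _ (n1o u c1 c4 c3 c2 c7 c10 c9 c8) (n1o v d1 d4 d3 d2 d7 d10 d9 d8),
        wB_other c1 c2 c3 c4 c5 c6 c7 c8 c9 c10,
        wB_other d1 d2 d3 d4 d5 d6 d7 d8 d9 d10]
      exact hα.2.1 u v hadj
    · intro u
      have hval : ∀ w : BV n, N1.m u = w → u ≠ w → ((BGofH H).cost N1 u u : ℝ) = -1 := by
        intro w hw hne
        have : (BGofH H).cost N1 u u = -1 := by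
          unfold RoommatesInstance.cost
          rw [if_pos rfl, if_neg (by rw [hw]; exact fun h => hne h.symm)]
        rw [this]; norm_num
      by_cases c1 : u = BV.s i j
      · subst c1; rw [hval _ n1s (by simp), wB_s]
      by_cases c2 : u = BV.t i j
      · subst c2; rw [hval _ n1t (by simp), wB_t]
      by_cases c3 : u = BV.s' i j
      · subst c3; rw [hval _ n1s' (by simp), wB_s']; norm_num
      by_cases c4 : u = BV.t' i j
      · subst c4; rw [hval _ n1t' (by simp), wB_t']; norm_num
      by_cases c5 : u = BV.s'' i j
      · subst c5; rw [hval _ n1s'' (by simp), wB_s'']; norm_num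
      by_cases c6 : u = BV.t'' i j
      · subst c6; rw [hval _ n1t'' (by simp), wB_t'']
      by_cases c7 : u = BV.a i
      · subst c7; rw [hval _ n1a (by simp), wB_a]; norm_num
      by_cases c8 : u = BV.b i
      · subst c8; rw [hval _ n1b (by simp), wB_b]; norm_num
      by_cases c9 : u = BV.a' i
      · subst c9; rw [hval _ n1a' (by simp), wB_a']
      by_cases c10 : u = BV.b' i
      · subst c10; rw [hval _ n1b' (by simp), wB_b']
      rw [cost_congr _ (n1o u c1 c4 c3 c2 c7 c10 c9 c8) (n1o u c1 c4 c3 c2 c7 c10 c9 c8),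
        wB_other c1 c2 c3 c4 c5 c6 c7 c8 c9 c10]
      exact hα.2.2 u
  case _ =>
    classical
    set N1 : (BGofH H).Matching := ⟨swB H N i j, inv1, adj1⟩ with hN1def
    have n1o : ∀ u : BV n, u ≠ BV.s i j → u ≠ BV.t' i j → u ≠ BV.s' i j → u ≠ BV.t i j →
        u ≠ BV.a i → u ≠ BV.b' i → u ≠ BV.a' i → u ≠ BV.b i → N1.m u = N.m u :=
      fun u a b c d e f g h => swB_other a b c d e f g h
    set L : Finset (BV n) :=
      {BV.s i j, BV.t i j, BV.s' i j, BV.t' i j, BV.s'' i j, BV.t'' i j,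
       BV.a i, BV.b i, BV.a' i, BV.b' i} with hLdef
    have hnotL : ∀ u : BV n, u ∉ L → u ≠ BV.s i j ∧ u ≠ BV.t i j ∧ u ≠ BV.s' i j ∧
        u ≠ BV.t' i j ∧ u ≠ BV.s'' i j ∧ u ≠ BV.t'' i j ∧ u ≠ BV.a i ∧ u ≠ BV.b i ∧
        u ≠ BV.a' i ∧ u ≠ BV.b' i := by
      intro u hu
      refine ⟨?_, ?_, ?_, ?_, ?_, ?_, ?_, ?_, ?_, ?_⟩ <;> rintro rfl <;> apply hu <;>
        simp [hLdef]
    have hc : ∑ u ∈ Finset.univ \ L, (if N1.m u ≠ u then wgt u (N1.m u) else 0) =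
        ∑ u ∈ Finset.univ \ L, (if N.m u ≠ u then wgt u (N.m u) else 0) := by
      refine Finset.sum_congr rfl (fun u hu => ?_)
      obtain ⟨e1, e2, e3, e4, e5, e6, e7, e8, e9, e10⟩ := hnotL u (Finset.mem_sdiff.1 hu).2
      rw [n1o u e1 e4 e3 e2 e7 e10 e9 e8]
    have hL1 : ∑ u ∈ L, (if N.m u ≠ u then wgt u (N.m u) else 0) = 12 := by
      rw [hLdef]
      rw [Finset.sum_insert (by simp), Finset.sum_insert (by simp),
        Finset.sum_insert (by simp), Finset.sum_insert (by simp),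
        Finset.sum_insert (by simp), Finset.sum_insert (by simp),
        Finset.sum_insert (by simp), Finset.sum_insert (by simp),
        Finset.sum_insert (by simp), Finset.sum_singleton]
      rw [hms, hmt, hms', hmt', hms'', hmt'', hma, hmb, hma', hmb']
      rw [if_neg (by simp), if_neg (by simp), if_pos (by simp), if_pos (by simp),
        if_pos (by simp), if_pos (by simp), if_pos (by simp), if_pos (by simp),
        if_pos (by simp), if_pos (by simp)]
      rw [wgt_s'_t', wgt_t'_s', wgt_s''_t'', wgt_t''_s'', wgt_a_b, wgt_b_a, wgt_a'_b', wgt_b'_a']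
      norm_num
    have hL2 : ∑ u ∈ L, (if N1.m u ≠ u then wgt u (N1.m u) else 0) = 14 := by
      rw [hLdef]
      rw [Finset.sum_insert (by simp), Finset.sum_insert (by simp),
        Finset.sum_insert (by simp), Finset.sum_insert (by simp),
        Finset.sum_insert (by simp), Finset.sum_insert (by simp),
        Finset.sum_insert (by simp), Finset.sum_insert (by simp),
        Finset.sum_insert (by simp), Finset.sum_singleton]
      have g5 : N1.m (BV.s'' i j) = BV.t'' i j := by
        rw [n1o _ (by simp) (by simp) (by simp) (by simp) (by simp) (by simp) (by simp) (by simp), hms'']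
      have g6 : N1.m (BV.t'' i j) = BV.s'' i j := by
        rw [n1o _ (by simp) (by simp) (by simp) (by simp) (by simp) (by simp) (by simp) (by simp), hmt'']
      rw [show N1.m (BV.s i j) = BV.t' i j from swB_s, show N1.m (BV.t i j) = BV.s' i j from swB_t,
        show N1.m (BV.s' i j) = BV.t i j from swB_s', show N1.m (BV.t' i j) = BV.s i j from swB_t',
        g5, g6, show N1.m (BV.a i) = BV.b' i from swB_a (j := j), show N1.m (BV.b i) = BV.a' i from swB_b (j := j),
        show N1.m (BV.a' i) = BV.b i from swB_a' (j := j), show N1.m (BV.b' i) = BV.a i from swB_b' (j := j)]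
      rw [if_pos (by simp), if_pos (by simp), if_pos (by simp), if_pos (by simp),
        if_pos (by simp), if_pos (by simp), if_pos (by simp), if_pos (by simp),
        if_pos (by simp), if_pos (by simp)]
      rw [wgt_s_t', wgt_t_s', wgt_s'_t, wgt_t'_s, wgt_s''_t'', wgt_t''_s'',
        wgt_a_b', wgt_b_a', wgt_a'_b, wgt_b'_a]
      norm_num
    rw [mwt_split N L, mwt_split N1 L, hc, hL1, hL2]
    omega

end VCW

namespace VCW
open RoommatesInstance

variable {n : ℕ} {H : SimpleGraph (Fin n)} {N : (BGofH H).Matching} {α : BV n → ℝ}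

lemma b_top {i : Fin n} (hnb : N.m (BV.b i) ≠ BV.a i) :
    (BGofH H).Better (BV.b i) (BV.a i) (N.m (BV.b i)) := by
  by_cases h : N.m (BV.b i) = BV.b i
  · rw [h]; exact better_unm (by simp)
  · rcases nbr_b (N.adj_of_ne _ h) with h' | h' | h' | ⟨k, h', -, -⟩
    · exact absurd h' hnb
    · rw [h']; exact better_rank (adjs (adj_a_b i)) (adjs (adj_a'_b i)) (by norm_num [brank])
    · rw [h']; exact better_rank (adjs (adj_a_b i)) (adjs (adj_a0_b i)) (by norm_num [brank])
    · have hadjk : (BGofH H).adj (BV.b i) (BV.s k i) := by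
        rw [← h']; exact N.adj_of_ne _ h
      rw [h']
      exact better_rank (adjs (adj_a_b i)) hadjk (by simp only [brank]; omega)

lemma a_top {i : Fin n} (hnb : N.m (BV.a i) ≠ BV.b i) :
    (BGofH H).Better (BV.a i) (BV.b i) (N.m (BV.a i)) := by
  by_cases h : N.m (BV.a i) = BV.a i
  · rw [h]; exact better_unm (by simp)
  · rcases nbr_a (N.adj_of_ne _ h) with h' | h' | h' | ⟨k, h', -, -⟩
    · exact absurd h' hnb
    · rw [h']; exact better_rank (adj_a_b i) (adj_a_b' i) (by norm_num [brank])
    · have hadjk : (BGofH H).adj (BV.a i) BV.b0 := by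
        rw [← h']; exact N.adj_of_ne _ h
      rw [h']; exact better_rank (adj_a_b i) hadjk (by norm_num [brank])
    · have hadjk : (BGofH H).adj (BV.a i) (BV.t i k) := by
        rw [← h']; exact N.adj_of_ne _ h
      rw [h']
      exact better_rank (adj_a_b i) hadjk (by simp only [brank]; omega)

variable (hα : (BGofH H).IsWitness N α) (h01 : ∀ u, α u = 0 ∨ α u = 1 ∨ α u = -1)
  (hmax : ∀ N' : (BGofH H).Matching, (BGofH H).Popular N' → mwt H N' ≤ mwt H N)
include hα h01 hmax

lemma hard_case {i j : Fin n} (hij : H.Adj i j) (hlt : i < j)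
    (hmt' : N.m (BV.t' i j) = BV.s' i j)
    (hmt'' : N.m (BV.t'' i j) = BV.s'' i j)
    (hmt : N.m (BV.t i j) = BV.t i j) (hms : N.m (BV.s i j) = BV.s i j) : False := by
  have hms' : N.m (BV.s' i j) = BV.t' i j := minv hmt'
  have hms'' : N.m (BV.s'' i j) = BV.t'' i j := minv hmt''
  have hz1 : α (BV.s i j) = 0 := unm0 hα hms
  have hz2 : α (BV.t i j) = 0 := unm0 hα hmt
  have ht'0 : 0 ≤ α (BV.s i j) + α (BV.t' i j) := by
    refine edge_ge0 hα (adj_s_t' hij hlt) ?_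
    rintro ⟨-, hx, -⟩
    rw [hms] at hx
    exact better_left_self_false _ hx
  have hs'0 : 0 ≤ α (BV.s' i j) + α (BV.t i j) := by
    refine edge_ge0 hα (adj_s'_t hij hlt) ?_
    rintro ⟨-, -, hx⟩
    rw [hmt] at hx
    exact better_left_self_false _ hx
  have hpair' : α (BV.t' i j) = - α (BV.s' i j) := pairA hα hms'
  have hz3 : α (BV.s' i j) = 0 := by linarith
  have hz4 : α (BV.t' i j) = 0 := by linarith
  have ht''0 : 0 ≤ α (BV.s i j) + α (BV.t'' i j) := by
    refine edge_ge0 hα (adj_s_t'' hij hlt) ?_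
    rintro ⟨-, hx, -⟩
    rw [hms] at hx
    exact better_left_self_false _ hx
  have hs''0 : 0 ≤ α (BV.s'' i j) + α (BV.t i j) := by
    refine edge_ge0 hα (adj_s''_t hij hlt) ?_
    rintro ⟨-, -, hx⟩
    rw [hmt] at hx
    exact better_left_self_false _ hx
  have hpair'' : α (BV.t'' i j) = - α (BV.s'' i j) := pairA hα hms''
  have hz5 : α (BV.s'' i j) = 0 := by linarith
  have hz6 : α (BV.t'' i j) = 0 := by linarith
  have hnb : ¬ (BGofH H).Better (BV.a i) (BV.t i j) (N.m (BV.a i)) := by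
    intro hx
    have hbl := blocks11 hα h01 (u := BV.t i j) (v := BV.a i)
      ⟨adjs (adj_a_t hij hlt), by rw [hmt]; exact better_unm (by simp), hx⟩
    linarith [hbl.1]
  have hnbj : ¬ (BGofH H).Better (BV.b j) (BV.s i j) (N.m (BV.b j)) := by
    intro hx
    have hbl := blocks11 hα h01 (u := BV.s i j) (v := BV.b j)
      ⟨adjs (adj_b_s hij hlt), by rw [hms]; exact better_unm (by simp), hx⟩
    linarith [hbl.1]
  have hbjm : N.m (BV.b j) ≠ BV.s i j := fun h =>
    absurd ((minv h).symm.trans hms) (by simp)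
  have hbj : (BGofH H).Better (BV.b j) (N.m (BV.b j)) (BV.s i j) :=
    better_total (BGofH H) inst_tot N (adj_b_s hij hlt) hbjm hnbj
  have hage : 0 ≤ α (BV.t i j) + α (BV.a i) := by
    refine edge_ge0 hα (adjs (adj_a_t hij hlt)) ?_
    rintro ⟨-, hx, -⟩
    rw [hmt] at hx
    exact better_left_self_false _ hx
  rcases h01 (BV.a i) with hA | hA | hA
  · -- CASE B : α (a i) = 0
    have hmai : N.m (BV.a i) ≠ BV.a i := by
      intro h
      have hbl := blocks11 hα h01 (u := BV.t i j) (v := BV.a i)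
        ⟨adjs (adj_a_t hij hlt), by rw [hmt]; exact better_unm (by simp),
          by rw [h]; exact better_unm (by simp)⟩
      linarith [hbl.1]
    have hadjw : (BGofH H).adj (BV.a i) (N.m (BV.a i)) := N.adj_of_ne _ hmai
    rcases nbr_a hadjw with hab | hab | hab | ⟨k, hab, -, -⟩
    case _ => -- m (a i) = b i : the real CASE B
      have hmb : N.m (BV.b i) = BV.a i := minv hab
      have hzb : α (BV.b i) = 0 := by
        have := pairA hα hab; rw [hA] at this; linarith
      have hmb' : N.m (BV.b' i) = BV.a' i := by
        by_cases h : N.m (BV.b' i) = BV.b' i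
        · exfalso
          have ha' : N.m (BV.a' i) = BV.a' i := by
            by_contra h2
            rcases nbr_a' (N.adj_of_ne _ h2) with h3 | h3
            · exact absurd ((minv h3).symm.trans hmb) (by simp)
            · exact absurd ((minv h3).symm.trans h) (by simp)
          have hbl := blocks11 hα h01 (u := BV.a' i) (v := BV.b' i)
            ⟨adj_a'_b' i, by rw [ha']; exact better_unm (by simp),
              by rw [h]; exact better_unm (by simp)⟩
          have := unm0 hα ha'
          linarith [hbl.1]
        · rcases nbr_b' (N.adj_of_ne _ h) with h3 | h3
          · exact absurd ((minv h3).symm.trans hab) (by simp)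
          · exact h3
      have hma' : N.m (BV.a' i) = BV.b' i := minv hmb'
      have hw1 : 0 ≤ α (BV.a' i) + α (BV.b i) := by
        refine edge_ge0 hα (adj_a'_b i) ?_
        rintro ⟨-, hx, -⟩
        rw [hma'] at hx
        exact not_better_rank (by simp) (by norm_num [brank]) hx
      have hw2 : 0 ≤ α (BV.a i) + α (BV.b' i) := by
        refine edge_ge0 hα (adj_a_b' i) ?_
        rintro ⟨-, -, hx⟩
        rw [hmb'] at hx
        exact not_better_rank (by simp) (by norm_num [brank]) hx
      have hpaired : α (BV.b' i) = - α (BV.a' i) := pairA hα hma'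
      have hza' : α (BV.a' i) = 0 := by linarith
      have hzb' : α (BV.b' i) = 0 := by linarith
      obtain ⟨N', hpop, h9⟩ := swapB_main hij hlt hα h01 hmt' hms' hmt'' hms'' hmt hms
        hab hmb' hbj hz3 hz4 hz5 hz6 hA hzb hza' hzb'
      exact absurd (hmax N' hpop) (by omega)
    case _ => -- m (a i) = b' i : blocking (a,b) gives α (a i) = 1, contradiction
      have hq : N.m (BV.b i) ≠ BV.a i := fun h =>
        absurd ((minv h).symm.trans hab) (by simp)
      have hbl := blocks11 hα h01 (u := BV.a i) (v := BV.b i)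
        ⟨adj_a_b i, by rw [hab]; exact better_rank (adj_a_b i) (adj_a_b' i) (by norm_num [brank]),
          b_top hq⟩
      linarith [hbl.1]
    case _ =>
      have hq : N.m (BV.b i) ≠ BV.a i := fun h =>
        absurd ((minv h).symm.trans hab) (by simp)
      have hadjb0 : (BGofH H).adj (BV.a i) BV.b0 := by rw [← hab]; exact hadjw
      have hbl := blocks11 hα h01 (u := BV.a i) (v := BV.b i)
        ⟨adj_a_b i, by rw [hab]; exact better_rank (adj_a_b i) hadjb0 (by norm_num [brank]),
          b_top hq⟩
      linarith [hbl.1]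
    case _ =>
      have hq : N.m (BV.b i) ≠ BV.a i := fun h =>
        absurd ((minv h).symm.trans hab) (by simp)
      have hadjtk : (BGofH H).adj (BV.a i) (BV.t i k) := by rw [← hab]; exact hadjw
      have hbl := blocks11 hα h01 (u := BV.a i) (v := BV.b i)
        ⟨adj_a_b i, by rw [hab]; exact better_rank (adj_a_b i) hadjtk (by simp only [brank]; omega),
          b_top hq⟩
      linarith [hbl.1]
  · -- CASE A : α (a i) = 1
    obtain ⟨N', hpop, h9⟩ := swapA_main hij hlt hα h01 hmt' hms' hmt'' hms'' hmt hms
      hA hnb hbj hz3 hz4 hz5 hz6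
    exact absurd (hmax N' hpop) (by omega)
  · -- α (a i) = -1 : impossible
    linarith

lemma Dmain {i j : Fin n} (hij : H.Adj i j) (hlt : i < j) :
    α (BV.a i) = 1 ∨ α (BV.b j) = 1 := by
  by_cases h1 : N.m (BV.t' i j) = BV.t' i j
  · exfalso
    have hbs' : (BGofH H).Better (BV.s' i j) (BV.t' i j) (N.m (BV.s' i j)) := by
      by_cases h : N.m (BV.s' i j) = BV.s' i j
      · rw [h]; exact better_unm (by simp)
      · rcases (nbr_s' (N.adj_of_ne _ h)).1 with h2 | h2
        · exact absurd ((minv h2).symm.trans h1) (by simp)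
        · rw [h2]; exact better_rank (adj_s'_t' hij hlt) (adj_s'_t hij hlt) (by norm_num [brank])
    have hbl := blocks11 hα h01 (u := BV.s' i j) (v := BV.t' i j)
      ⟨adj_s'_t' hij hlt, hbs', by rw [h1]; exact better_unm (by simp)⟩
    have := unm0 hα h1
    linarith [hbl.2]
  rcases (nbr_t' (N.adj_of_ne _ h1)).1 with h2 | h2
  · -- config (iii) : m t' = s
    left
    have hms : N.m (BV.s i j) = BV.t' i j := minv h2
    have hms' : N.m (BV.s' i j) = BV.t i j := by
      by_cases h : N.m (BV.s' i j) = BV.s' i j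
      · exfalso
        have hbl := blocks11 hα h01 (u := BV.s' i j) (v := BV.t' i j)
          ⟨adj_s'_t' hij hlt, by rw [h]; exact better_unm (by simp),
            by rw [h2]; exact better_rank (adjs (adj_s'_t' hij hlt)) (adjs (adj_s_t' hij hlt)) (by norm_num [brank])⟩
        have := unm0 hα h
        linarith [hbl.1]
      · rcases (nbr_s' (N.adj_of_ne _ h)).1 with h3 | h3
        · exact absurd ((minv h3).symm.trans h2) (by simp)
        · exact h3
    have hbl := blocks11 hα h01 (u := BV.s' i j) (v := BV.t' i j)
      ⟨adj_s'_t' hij hlt,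
        by rw [hms']; exact better_rank (adj_s'_t' hij hlt) (adj_s'_t hij hlt) (by norm_num [brank]),
        by rw [h2]; exact better_rank (adjs (adj_s'_t' hij hlt)) (adjs (adj_s_t' hij hlt)) (by norm_num [brank])⟩
    have hpt : α (BV.t i j) = - α (BV.s' i j) := pairA hα hms'
    have hge : 0 ≤ α (BV.t i j) + α (BV.a i) := by
      refine edge_ge0 hα (adjs (adj_a_t hij hlt)) ?_
      rintro ⟨-, hx, -⟩
      rw [minv hms'] at hx
      exact not_better_rank (by simp) (by norm_num [brank]) hx
    have := le1 h01 (BV.a i)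
    linarith [hbl.1]
  · have hms' : N.m (BV.s' i j) = BV.t' i j := minv h2
    by_cases h3 : N.m (BV.t'' i j) = BV.t'' i j
    · exfalso
      have hbs'' : (BGofH H).Better (BV.s'' i j) (BV.t'' i j) (N.m (BV.s'' i j)) := by
        by_cases h : N.m (BV.s'' i j) = BV.s'' i j
        · rw [h]; exact better_unm (by simp)
        · rcases (nbr_s'' (N.adj_of_ne _ h)).1 with h4 | h4
          · exact absurd ((minv h4).symm.trans h3) (by simp)
          · rw [h4]; exact better_rank (adj_s''_t'' hij hlt) (adj_s''_t hij hlt) (by norm_num [brank])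
      have hbl := blocks11 hα h01 (u := BV.s'' i j) (v := BV.t'' i j)
        ⟨adj_s''_t'' hij hlt, hbs'', by rw [h3]; exact better_unm (by simp)⟩
      have := unm0 hα h3
      linarith [hbl.2]
    rcases (nbr_t'' (N.adj_of_ne _ h3)).1 with h4 | h4
    · -- config (ii) : m t'' = s
      right
      have hms'' : N.m (BV.s'' i j) = BV.t i j := by
        by_cases h : N.m (BV.s'' i j) = BV.s'' i j
        · exfalso
          have hbl := blocks11 hα h01 (u := BV.s'' i j) (v := BV.t'' i j)
            ⟨adj_s''_t'' hij hlt, by rw [h]; exact better_unm (by simp),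
              by rw [h4]; exact better_rank (adjs (adj_s''_t'' hij hlt)) (adjs (adj_s_t'' hij hlt)) (by norm_num [brank])⟩
          have := unm0 hα h
          linarith [hbl.1]
        · rcases (nbr_s'' (N.adj_of_ne _ h)).1 with h5 | h5
          · exact absurd ((minv h5).symm.trans h4) (by simp)
          · exact h5
      have hbl := blocks11 hα h01 (u := BV.s'' i j) (v := BV.t'' i j)
        ⟨adj_s''_t'' hij hlt,
          by rw [hms'']; exact better_rank (adj_s''_t'' hij hlt) (adj_s''_t hij hlt) (by norm_num [brank]),
          by rw [h4]; exact better_rank (adjs (adj_s''_t'' hij hlt)) (adjs (adj_s_t'' hij hlt)) (by norm_num [brank])⟩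
      have hps : α (BV.s i j) = - α (BV.t'' i j) := pairA hα h4
      have hge : 0 ≤ α (BV.s i j) + α (BV.b j) := by
        refine edge_ge0 hα (adjs (adj_b_s hij hlt)) ?_
        rintro ⟨-, hx, -⟩
        rw [minv h4] at hx
        exact not_better_rank (by simp) (by norm_num [brank]) hx
      have := le1 h01 (BV.b j)
      linarith [hbl.2]
    · -- m t'' = s''
      have hms'' : N.m (BV.s'' i j) = BV.t'' i j := minv h4
      have hmtc : N.m (BV.t i j) = BV.t i j ∨ N.m (BV.t i j) = BV.a i := by
        by_cases h : N.m (BV.t i j) = BV.t i j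
        · exact Or.inl h
        · rcases (nbr_t (N.adj_of_ne _ h)).1 with h5 | h5 | h5
          · exact absurd ((minv h5).symm.trans hms') (by simp)
          · exact absurd ((minv h5).symm.trans hms'') (by simp)
          · exact Or.inr h5
      have hmsc : N.m (BV.s i j) = BV.s i j ∨ N.m (BV.s i j) = BV.b j := by
        by_cases h : N.m (BV.s i j) = BV.s i j
        · exact Or.inl h
        · rcases (nbr_s (N.adj_of_ne _ h)).1 with h5 | h5 | h5
          · exact absurd ((minv h5).symm.trans h2) (by simp)
          · exact absurd ((minv h5).symm.trans h4) (by simp)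
          · exact Or.inr h5
      rcases hmtc with hmt0 | hmt0 <;> rcases hmsc with hms0 | hms0
      · exact (hard_case hα h01 hmax hij hlt h2 h4 hmt0 hms0).elim
      · -- t unmatched, s matched to b j : impossible
        exfalso
        have hzt : α (BV.t i j) = 0 := unm0 hα hmt0
        have hmbj : N.m (BV.b j) = BV.s i j := minv hms0
        have hqa : N.m (BV.a j) ≠ BV.b j := fun h =>
          absurd ((minv h).symm.trans hmbj) (by simp)
        have hbl := blocks11 hα h01 (u := BV.b j) (v := BV.a j)
          ⟨adjs (adj_a_b j),
            by rw [hmbj]; exact better_rank (adjs (adj_a_b j)) (adj_b_s hij hlt) (by simp only [brank]; omega),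
            a_top hqa⟩
        have hps : α (BV.s i j) = - α (BV.b j) := pairA hα hmbj
        have hge1 : 0 ≤ α (BV.s' i j) + α (BV.t i j) := by
          refine edge_ge0 hα (adj_s'_t hij hlt) ?_
          rintro ⟨-, -, hx⟩
          rw [hmt0] at hx
          exact better_left_self_false _ hx
        have hge2 : 0 ≤ α (BV.s i j) + α (BV.t' i j) := by
          refine edge_ge0 hα (adj_s_t' hij hlt) ?_
          rintro ⟨-, hx, -⟩
          rw [hms0] at hx
          exact not_better_rank (by simp) (by norm_num [brank]) hx
        have hp' : α (BV.t' i j) = - α (BV.s' i j) := pairA hα hms'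
        linarith [hbl.1]
      · -- t matched to a i, s unmatched : impossible
        exfalso
        have hzs : α (BV.s i j) = 0 := unm0 hα hms0
        have hmai : N.m (BV.a i) = BV.t i j := minv hmt0
        have hqb : N.m (BV.b i) ≠ BV.a i := fun h =>
          absurd ((minv h).symm.trans hmai) (by simp)
        have hbl := blocks11 hα h01 (u := BV.a i) (v := BV.b i)
          ⟨adj_a_b i,
            by rw [hmai]; exact better_rank (adj_a_b i) (adj_a_t hij hlt) (by simp only [brank]; omega),
            b_top hqb⟩
        have hpt : α (BV.t i j) = - α (BV.a i) := pairA hα hmai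
        have hge1 : 0 ≤ α (BV.s'' i j) + α (BV.t i j) := by
          refine edge_ge0 hα (adj_s''_t hij hlt) ?_
          rintro ⟨-, -, hx⟩
          rw [hmt0] at hx
          exact not_better_rank (by simp) (by norm_num [brank]) hx
        have hge2 : 0 ≤ α (BV.s i j) + α (BV.t'' i j) := by
          refine edge_ge0 hα (adj_s_t'' hij hlt) ?_
          rintro ⟨-, hx, -⟩
          rw [hms0] at hx
          exact better_left_self_false _ hx
        have hp'' : α (BV.t'' i j) = - α (BV.s'' i j) := pairA hα hms''
        linarith [hbl.1]
      · -- t matched to a i, s matched to b j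
        left
        have hmai : N.m (BV.a i) = BV.t i j := minv hmt0
        have hqb : N.m (BV.b i) ≠ BV.a i := fun h =>
          absurd ((minv h).symm.trans hmai) (by simp)
        have hbl := blocks11 hα h01 (u := BV.a i) (v := BV.b i)
          ⟨adj_a_b i,
            by rw [hmai]; exact better_rank (adj_a_b i) (adj_a_t hij hlt) (by simp only [brank]; omega),
            b_top hqb⟩
        exact hbl.1
end VCW


open RoommatesInstance in
/-- Let `N` be a max-weight popular matching of `G` (weights
compared via `2·w(N) = mwt H N`) and `α ∈ {0,±1}^{A∪B}` a witness of `N`.  Then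
`U_N = {i : α_u ∈ {±1} for all u ∈ C_i}` is a vertex cover of `H`. -/
theorem UN_is_vertex_cover {n : ℕ} (H : SimpleGraph (Fin n))
    (N : (BGofH H).Matching) (hN : (BGofH H).Popular N)
    (hmax : ∀ N' : (BGofH H).Matching, (BGofH H).Popular N' → mwt H N' ≤ mwt H N)
    (α : BV n → ℝ) (hα : (BGofH H).IsWitness N α)
    (h01 : ∀ u, α u = 0 ∨ α u = 1 ∨ α u = -1) :
    ∀ i j : Fin n, H.Adj i j →
      ((α (BV.a i) = 1 ∨ α (BV.a i) = -1) ∧ (α (BV.a' i) = 1 ∨ α (BV.a' i) = -1) ∧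
        (α (BV.b i) = 1 ∨ α (BV.b i) = -1) ∧ (α (BV.b' i) = 1 ∨ α (BV.b' i) = -1)) ∨
      ((α (BV.a j) = 1 ∨ α (BV.a j) = -1) ∧ (α (BV.a' j) = 1 ∨ α (BV.a' j) = -1) ∧
        (α (BV.b j) = 1 ∨ α (BV.b j) = -1) ∧ (α (BV.b' j) = 1 ∨ α (BV.b' j) = -1)) := by
  intro i j hadj
  rcases lt_trichotomy i j with hlt | heq | hlt
  · rcases VCW.Dmain hα h01 hmax hadj hlt with h | h
    · exact Or.inl (VCW.Cfix_a hα h01 h)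
    · exact Or.inr (VCW.Cfix_b hα h01 h)
  · subst heq
    exact absurd hadj (H.loopless.irrefl i)
  · rcases VCW.Dmain hα h01 hmax hadj.symm hlt with h | h
    · exact Or.inr (VCW.Cfix_a hα h01 h)
    · exact Or.inl (VCW.Cfix_b hα h01 h)
end
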